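/- arXiv:1902.00973 — 6 statements merged into one kernel-verified Lean document; each statement's English description precedes it below -/
import Mathlib

section
/- Let P ⊆ ℝ^n be a nonempty lattice polytope and Q ⊆ ℝ^n a nonempty lattice polytope. Let ι denote the injective ℂ-algebra embedding of the Laurent polynomial ring ℂ[ℤ^n] into the field of rational functions ℂ(x_1,…,x_n) (the fraction field of ℂ[x_1,…,x_n]). Suppose d ≥ 1 and c_1,…,c_d ∈ ℂ(x_1,…,x_n) with c_d ≠ 0 are such that ι(σ_{(k+d)P+Q}) = Σ_{j=1}^d c_j · ι(σ_{(k+d−j)P+Q}) for all integers k ≥ 0. Then the polynomial ∏_{v ∈ V(P)} (X − x^v) divides X^d − Σ_{j=1}^d c_j X^{d−j} in ℂ(x_1,…,x_n)[X]. In particular, ∏_{v ∈ V(P)} (X − x^v) is the minimal characteristic polynomial of a linear recursion satisfied by the sequence {σ_{kP+Q}(x)}_{k≥0}. -/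
open scoped BigOperators Pointwise

noncomputable section

/-- Coercion of an integer lattice point to a real vector. -/
def latC {n : ℕ} (m : Fin n → ℤ) : Fin n → ℝ := fun i => (m i : ℝ)

/-- A polytope is the convex hull of a finite set of points in `ℝ^n`. -/
def IsPolytope {n : ℕ} (S : Set (Fin n → ℝ)) : Prop :=
  ∃ F : Finset (Fin n → ℝ), S = convexHull ℝ (F : Set (Fin n → ℝ))

/-- A lattice polytope is the convex hull of finitely many lattice points. -/
def IsLatticePolytope {n : ℕ} (S : Set (Fin n → ℝ)) : Prop :=
  ∃ F : Finset (Fin n → ℤ), S = convexHull ℝ (latC '' (F : Set (Fin n → ℤ)))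

/-- The integer point transform `σ_S = ∑_{m ∈ S ∩ ℤ^n} x^m ∈ ℂ[ℤ^n]`. -/
def intPtTransform {n : ℕ} (S : Set (Fin n → ℝ)) : AddMonoidAlgebra ℂ (Fin n → ℤ) :=
  ∑ᶠ m ∈ {m : Fin n → ℤ | latC m ∈ S}, AddMonoidAlgebra.single m 1

/-! Fix a vertex `v` of `P`, and a linear functional `f` attaining its maximum on `P` only at `v`
and on `Q` only at a lattice point `w`. Shifted by `x^{-(m v + w)}`, the transforms
`σ_{mP+Q}` converge coefficientwise to the indicator series `χ` of the lattice points `y` with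
`m v + w + y ∈ mP + Q` for large `m`, and `f < 0` on the support of `χ` away from `0`.
Clearing denominators `c_j = p_j / q` and letting `k → ∞` in the recursion gives
`(x^{dv} q - ∑ x^{(d-j)v} p_j) · χ = 0`, and the coefficient at an `f`-maximal monomial shows
`x^{dv} q = ∑ x^{(d-j)v} p_j`: each `x^v` is a root of `X^d - ∑ c_j X^{d-j}`. These roots are
distinct, so their linear factors are coprime. -/

open Filter MeasureTheory

def IsStrictMaxOn {α β : Type*} [Preorder β] (f : α → β) (s : Set α) (a : α) : Prop :=
  ∀ x ∈ s, x ≠ a → f x < f a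

section StrictMax

variable {𝕜 E : Type*} [Field 𝕜] [LinearOrder 𝕜] [IsStrictOrderedRing 𝕜] [AddCommGroup E]
  [Module 𝕜 E]

theorem convex_setOf_lt_union_singleton (f : E →ₗ[𝕜] 𝕜) (x : E) :
    Convex 𝕜 ({y | f y < f x} ∪ {x}) := by
  refine convex_iff_openSegment_subset.mpr ?_
  rintro y (hy | rfl) z (hz | rfl) _ ⟨a, b, ha, hb, hab, rfl⟩
  on_goal 4 => exact Or.inr (Convex.combo_self hab _)
  all_goals
    left
    obtain rfl : b = 1 - a := by linarith
    simp only [Set.mem_ofPred_eq, map_add, map_smul, smul_eq_mul] at *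
    nlinarith

theorem IsStrictMaxOn.convexHull {f : E →ₗ[𝕜] 𝕜} {s : Set E} {x : E} (h : IsStrictMaxOn f s x) :
    IsStrictMaxOn f (convexHull 𝕜 s) x := by
  refine fun y hy hyx => (convexHull_min (fun z hz => ?_)
    (convex_setOf_lt_union_singleton f x) hy).resolve_right hyx
  by_cases hzx : z = x
  · exact Or.inr hzx
  · exact Or.inl (h z hz hzx)

theorem IsStrictMaxOn.smul_add {f : E →ₗ[𝕜] 𝕜} {s t : Set E} {x y : E} (hs : IsStrictMaxOn f s x)
    (ht : IsStrictMaxOn f t y) {r : 𝕜} (hr : 0 ≤ r) : IsStrictMaxOn f (r • s + t) (r • x + y) := by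
  rintro _ ⟨_, ⟨p, hp, rfl⟩, q, hq, rfl⟩ hne
  simp only [map_add, map_smul, smul_eq_mul]
  have hpx : f p ≤ f x := by
    rcases eq_or_ne p x with rfl | h
    · exact le_rfl
    · exact (hs p hp h).le
  rcases eq_or_ne q y with rfl | hqy
  · have hr' : 0 < r := hr.lt_of_ne fun h => hne (by simp [← h])
    have hpx' : p ≠ x := fun h => hne (by rw [h])
    have := mul_lt_mul_of_pos_left (hs p hp hpx') hr'
    linarith
  · have := mul_le_mul_of_nonneg_left hpx hr
    linarith [ht q hq hqy]

end StrictMax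

theorem exists_isStrictMaxOn_of_mem_extremePoints_convexHull {E : Type*} [NormedAddCommGroup E]
    [NormedSpace ℝ E] {s : Set E} {x : E} (hs : s.Finite)
    (hx : x ∈ (convexHull ℝ s).extremePoints ℝ) : ∃ f : StrongDual ℝ E, IsStrictMaxOn f s x := by
  have hx' : x ∉ convexHull ℝ (s \ {x}) := fun h =>
    (convexHull_min (Set.sdiff_subset_sdiff_left (subset_convexHull ℝ s))
      ((convex_convexHull ℝ s).mem_extremePoints_iff_convex_sdiff.mp hx).2 h).2 rfl
  obtain ⟨f, u, hfu, hux⟩ := geometric_hahn_banach_closed_point (convex_convexHull ℝ _)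
    (hs.sdiff.isCompact_convexHull ℝ).isClosed hx'
  exact ⟨f, fun y hy hyx => (hfu y (subset_convexHull ℝ _ ⟨hy, hyx⟩)).trans hux⟩

theorem exists_isStrictMaxOn_injOn {ι : Type*} [Fintype ι] {s t : Set (ι → ℝ)} {x : ι → ℝ}
    (hs : s.Finite) (hx : x ∈ (convexHull ℝ s).extremePoints ℝ) (ht : t.Finite) :
    ∃ f : Module.Dual ℝ (ι → ℝ), IsStrictMaxOn f s x ∧ t.InjOn f := by
  classical
  -- The functionals strictly maximised at `x` form a nonempty open set; those identifying two
  -- points of `t` lie in finitely many hyperplanes, a null set.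
  let φ := dotProductEquiv ℝ ι
  let good : Set (ι → ℝ) := ⋂ y ∈ s \ {x}, {a | φ a y < φ a x}
  let bad : Set (ι → ℝ) := ⋃ y ∈ t, ⋃ z ∈ t \ {y}, LinearMap.ker (φ (y - z))
  have hgood_open : IsOpen good := (hs.sdiff).isOpen_biInter fun y _ =>
    isOpen_lt (continuous_id.dotProduct continuous_const)
      (continuous_id.dotProduct continuous_const)
  obtain ⟨f, hf⟩ := exists_isStrictMaxOn_of_mem_extremePoints_convexHull hs hx
  have hgood_ne : good.Nonempty := ⟨φ.symm f.toLinearMap, Set.mem_iInter₂.mpr fun y hy => by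
    rw [Set.mem_ofPred_eq, φ.apply_symm_apply]
    exact hf y hy.1 hy.2⟩
  have hbad : volume bad = 0 := by
    refine (measure_biUnion_null_iff ht.countable).mpr fun y _ =>
      (measure_biUnion_null_iff ht.sdiff.countable).mpr fun z hz => ?_
    refine Measure.addHaar_submodule _ _ fun htop => ?_
    have : φ (y - z) (y - z) = 0 := by rw [← LinearMap.mem_ker, htop]; trivial
    rw [dotProductEquiv_apply_apply] at this
    exact hz.2 (sub_eq_zero.mp (dotProduct_self_eq_zero.mp this)).symm
  obtain ⟨a, ha_good, ha_bad⟩ : (good \ bad).Nonempty := nonempty_of_measure_ne_zero <| by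
    rw [measure_sdiff_null hbad]; exact (hgood_open.measure_pos volume hgood_ne).ne'
  refine ⟨φ a, fun y hy hyx => Set.mem_iInter₂.mp ha_good y ⟨hy, hyx⟩, fun y hy z hz hyz => ?_⟩
  by_contra hne
  refine ha_bad (Set.mem_biUnion hy (Set.mem_biUnion ⟨hz, Ne.symm hne⟩ ?_))
  simpa [φ, sub_eq_zero, dotProduct_comm] using hyz

section Recurrence

open AddMonoidAlgebra

variable {k G : Type*} [Ring k] [AddCommGroup G]

/-- The coefficient at `o` of the product of `A` with the formal series `∑ χ y x^y`. -/
def coeffMulSeries (χ : G → k) (o : G) : k[G] →ₗ[k] k :=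
  Finsupp.linearCombination k (fun u => χ (-u + o)) ∘ₗ (coeffLinearEquiv k).toLinearMap

theorem eventually_coeff_mul_eq_coeffMulSeries {t : ℕ → k[G]} {χ : G → k}
    (ht : ∀ y, ∀ᶠ m in atTop, (t m).coeff y = χ y) (A : k[G]) (o : G) :
    ∀ᶠ m in atTop, (A * t m).coeff o = coeffMulSeries χ o A := by
  filter_upwards [(eventually_all_finset A.coeff.support).mpr fun u _ => ht (-u + o)] with m hm
  simp only [coeff_mul_apply_left, coeffMulSeries, LinearMap.comp_apply, LinearEquiv.coe_coe,
    coeffLinearEquiv_apply, Finsupp.linearCombination_apply, smul_eq_mul]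
  exact Finset.sum_congr rfl fun u hu => by simp only [hm u hu]

variable {Γ : Type*} [AddCommGroup Γ] [LinearOrder Γ] [IsOrderedAddMonoid Γ]

theorem coeffMulSeries_eq_of_isMaxOn {χ : G → k} (ℓ : G →+ Γ)
    (hχ : ∀ y, χ y ≠ 0 → y ≠ 0 → ℓ y < 0) {A : k[G]} {μ : G} (hμ : μ ∈ A.coeff.support)
    (hmax : ∀ u ∈ A.coeff.support, ℓ u ≤ ℓ μ) : coeffMulSeries χ μ A = A.coeff μ * χ 0 := by
  simp only [coeffMulSeries, LinearMap.comp_apply, LinearEquiv.coe_coe, coeffLinearEquiv_apply,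
    Finsupp.linearCombination_apply, smul_eq_mul, Finsupp.sum]
  rw [Finset.sum_eq_single_of_mem μ hμ fun u hu huμ => ?_, neg_add_cancel]
  by_contra h
  have := hχ _ (right_ne_zero_of_mul h) (neg_add_eq_zero.not.mpr huμ)
  rw [map_add, map_neg, neg_add_lt_iff_lt_add, add_zero] at this
  exact (hmax u hu).not_gt this

theorem eq_sum_of_forall_mul_eq_sum [NoZeroDivisors k] {ι : Type*} (ℓ : G →+ Γ) {t : ℕ → k[G]}
    {χ : G → k} (ht : ∀ y, ∀ᶠ m in atTop, (t m).coeff y = χ y) (hχ0 : χ 0 ≠ 0)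
    (hχ : ∀ y, χ y ≠ 0 → y ≠ 0 → ℓ y < 0) {A : k[G]} {s : Finset ι} {B : ι → k[G]}
    {e : ι → ℕ} {d : ℕ} (h : ∀ m, A * t (m + d) = ∑ i ∈ s, B i * t (m + e i)) :
    A = ∑ i ∈ s, B i := by
  have hR : ∀ o, coeffMulSeries χ o (A - ∑ i ∈ s, B i) = 0 := by
    intro o
    have hA := (tendsto_add_atTop_nat d).eventually (eventually_coeff_mul_eq_coeffMulSeries ht A o)
    have hB := (eventually_all_finset s).mpr fun i _ =>
      (tendsto_add_atTop_nat (e i)).eventually (eventually_coeff_mul_eq_coeffMulSeries ht (B i) o)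
    obtain ⟨m, hAm, hBm⟩ := (hA.and hB).exists
    rw [map_sub, map_sum, ← hAm, h m, coeff_sum, Finset.sum_apply', sub_eq_zero]
    exact Finset.sum_congr rfl hBm
  rw [← sub_eq_zero, ← coeff_eq_zero]
  by_contra hne
  obtain ⟨μ, hμ, hmax⟩ := (A - ∑ i ∈ s, B i).coeff.support.exists_max_image ℓ
    (Finsupp.support_nonempty_iff.mpr hne)
  have := hR μ
  rw [coeffMulSeries_eq_of_isMaxOn ℓ hχ hμ hmax] at this
  exact mul_ne_zero (Finsupp.mem_support_iff.mp hμ) hχ0 this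

end Recurrence

section LatticePoints

open AddMonoidAlgebra

variable {n : ℕ}

@[simp] theorem latC_add (a b : Fin n → ℤ) : latC (a + b) = latC a + latC b := by
  funext i; simp [latC]

@[simp] theorem latC_nsmul (m : ℕ) (a : Fin n → ℤ) : latC (m • a) = (m : ℝ) • latC a := by
  funext i; simp [latC]

@[simp] theorem latC_zero : latC (0 : Fin n → ℤ) = 0 := by
  funext i; simp [latC]

theorem latC_injective : Function.Injective (latC (n := n)) := fun _ _ h =>
  funext fun i => Int.cast_injective (congrFun h i)

theorem finite_setOf_latC_mem {S : Set (Fin n → ℝ)} (hS : Bornology.IsBounded S) :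
    {m | latC m ∈ S}.Finite := by
  have hlatC : Isometry (latC (n := n)) := .piMap (fun _ => Int.cast) fun _ => Real.isometry_intCast
  exact (Metric.finite_isBounded_inter_isClosed IsDiscrete.univ
    (hlatC.antilipschitz.isBounded_preimage hS) isClosed_univ).subset fun m hm => ⟨hm, trivial⟩

theorem coeff_intPtTransform {S : Set (Fin n → ℝ)} (hS : Bornology.IsBounded S) (m : Fin n → ℤ) :
    (intPtTransform S).coeff m = {z | latC z ∈ S}.indicator 1 m := by
  classical
  rw [intPtTransform, finsum_mem_eq_finite_toFinset_sum _ (finite_setOf_latC_mem hS), coeff_sum,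
    Finset.sum_apply']
  simp [coeff_single, Finsupp.single_apply, Set.indicator_apply]

theorem IsLatticePolytope.convex {P : Set (Fin n → ℝ)} (hP : IsLatticePolytope P) :
    Convex ℝ P := by
  obtain ⟨F, rfl⟩ := hP
  exact convex_convexHull ℝ _

theorem IsLatticePolytope.isBounded {P : Set (Fin n → ℝ)} (hP : IsLatticePolytope P) :
    Bornology.IsBounded P := by
  obtain ⟨F, rfl⟩ := hP
  exact ((F.finite_toSet.image _).isCompact_convexHull ℝ).isBounded

theorem IsLatticePolytope.exists_isStrictMaxOn {P Q : Set (Fin n → ℝ)} (hP : IsLatticePolytope P)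
    (hQ : IsLatticePolytope Q) (hQne : Q.Nonempty) {x : Fin n → ℝ}
    (hx : x ∈ P.extremePoints ℝ) :
    ∃ f : Module.Dual ℝ (Fin n → ℝ), ∃ w : Fin n → ℤ,
      latC w ∈ Q ∧ IsStrictMaxOn f P x ∧ IsStrictMaxOn f Q (latC w) := by
  obtain ⟨FP, rfl⟩ := hP
  obtain ⟨FQ, rfl⟩ := hQ
  have hD : (latC '' (FQ : Set (Fin n → ℤ))).Finite := FQ.finite_toSet.image _
  obtain ⟨f, hfP, hfQ⟩ := exists_isStrictMaxOn_injOn (FP.finite_toSet.image _) hx hD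
  obtain ⟨_, ⟨w, hw, rfl⟩, hwmax⟩ := Set.exists_max_image _ f hD (convexHull_nonempty_iff.mp hQne)
  refine ⟨f, w, subset_convexHull ℝ _ ⟨w, hw, rfl⟩, hfP.convexHull, IsStrictMaxOn.convexHull ?_⟩
  exact fun q hq hqw => (hwmax q hq).lt_of_ne fun h => hqw (hfQ hq ⟨w, hw, rfl⟩ h)

theorem add_mem_natCast_succ_smul_add {P Q : Set (Fin n → ℝ)} (hP : Convex ℝ P) {x z : Fin n → ℝ}
    (hx : x ∈ P) {m : ℕ} (hz : z ∈ (m : ℝ) • P + Q) : z + x ∈ ((m + 1 : ℕ) : ℝ) • P + Q := by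
  rw [Nat.cast_succ, hP.add_smul (Nat.cast_nonneg m) zero_le_one, one_smul, add_right_comm]
  exact Set.add_mem_add hz hx

def vertexCone (P Q : Set (Fin n → ℝ)) (v w : Fin n → ℤ) : Set (Fin n → ℤ) :=
  {y | ∃ m : ℕ, latC (m • v + w + y) ∈ (m : ℝ) • P + Q}

variable {P Q : Set (Fin n → ℝ)} {v w : Fin n → ℤ}

theorem zero_mem_vertexCone (hv : latC v ∈ P) (hw : latC w ∈ Q) : 0 ∈ vertexCone P Q v w :=
  ⟨1, by simpa using Set.add_mem_add hv hw⟩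

theorem eventually_mem_of_mem_vertexCone (hP : Convex ℝ P) (hv : latC v ∈ P) {y : Fin n → ℤ}
    (hy : y ∈ vertexCone P Q v w) : ∀ᶠ m : ℕ in atTop, latC (m • v + w + y) ∈ (m : ℝ) • P + Q := by
  obtain ⟨m₀, hm₀⟩ := hy
  refine eventually_atTop.mpr ⟨m₀, fun m hm => ?_⟩
  induction m, hm using Nat.le_induction with
  | base => exact hm₀
  | succ m _ ih =>
    convert add_mem_natCast_succ_smul_add hP hv ih using 1
    simp only [latC_add, latC_nsmul, add_smul, one_smul]
    abel

theorem lt_zero_of_mem_vertexCone {f : Module.Dual ℝ (Fin n → ℝ)}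
    (hP : IsStrictMaxOn f P (latC v)) (hQ : IsStrictMaxOn f Q (latC w)) {y : Fin n → ℤ}
    (hy : y ∈ vertexCone P Q v w) (hy0 : y ≠ 0) : f (latC y) < 0 := by
  obtain ⟨m, hm⟩ := hy
  rw [latC_add, latC_add, latC_nsmul] at hm
  have hne : (m : ℝ) • latC v + latC w + latC y ≠ (m : ℝ) • latC v + latC w := fun h =>
    hy0 (latC_injective (by rwa [add_eq_left, ← latC_zero] at h))
  have := hP.smul_add hQ (Nat.cast_nonneg m) _ hm hne
  rw [map_add] at this
  linarith

theorem eventually_coeff_single_mul_intPtTransform (hP : IsLatticePolytope P)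
    (hQ : IsLatticePolytope Q) (hv : latC v ∈ P) (y : Fin n → ℤ) :
    ∀ᶠ m : ℕ in atTop, (single (-(m • v + w)) 1 * intPtTransform ((m : ℝ) • P + Q)).coeff y =
      (vertexCone P Q v w).indicator 1 y := by
  have hbdd (m : ℕ) : Bornology.IsBounded ((m : ℝ) • P + Q) :=
    (hP.isBounded.smul₀ _).add hQ.isBounded
  simp only [coeff_single_mul_apply, neg_neg, one_mul, coeff_intPtTransform (hbdd _)]
  by_cases hy : y ∈ vertexCone P Q v w
  · filter_upwards [eventually_mem_of_mem_vertexCone hP.convex hv hy] with m hm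
    rw [Set.indicator_of_mem (s := {z | latC z ∈ (m : ℝ) • P + Q}) hm, Set.indicator_of_mem hy]
    rfl
  · refine .of_forall fun m => ?_
    rw [Set.indicator_of_notMem (s := {z | latC z ∈ (m : ℝ) • P + Q}) fun hm => hy ⟨m, hm⟩,
      Set.indicator_of_notMem hy]

end LatticePoints

open AddMonoidAlgebra in
theorem single_nsmul_mul_eq_sum_of_recurrence {n : ℕ} {P Q : Set (Fin n → ℝ)}
    (hP : IsLatticePolytope P) (hQ : IsLatticePolytope Q) (hQne : Q.Nonempty) {v : Fin n → ℤ}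
    (hv : latC v ∈ P.extremePoints ℝ) {ι : Type*} {A : AddMonoidAlgebra ℂ (Fin n → ℤ)}
    {s : Finset ι} {B : ι → AddMonoidAlgebra ℂ (Fin n → ℤ)} {e : ι → ℕ} {d : ℕ}
    (h : ∀ m : ℕ, A * intPtTransform (((m + d : ℕ) : ℝ) • P + Q) =
      ∑ i ∈ s, B i * intPtTransform (((m + e i : ℕ) : ℝ) • P + Q)) :
    single (d • v) 1 * A = ∑ i ∈ s, single (e i • v) 1 * B i := by
  obtain ⟨f, w, hwQ, hfP, hfQ⟩ := hP.exists_isStrictMaxOn hQ hQne hv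
  set t : ℕ → AddMonoidAlgebra ℂ (Fin n → ℤ) :=
    fun m => single (-(m • v + w)) 1 * intPtTransform ((m : ℝ) • P + Q)
  have ht_shift (m e : ℕ) : single (e • v) 1 * t (m + e) =
      single (-(m • v + w)) 1 * intPtTransform (((m + e : ℕ) : ℝ) • P + Q) := by
    rw [← mul_assoc, single_mul_single, one_mul, add_nsmul]
    congr 2
    abel
  refine eq_sum_of_forall_mul_eq_sum (d := d) (e := e)
    (AddMonoidHom.mk' (f ∘ latC) fun a b => by simp)
    (eventually_coeff_single_mul_intPtTransform hP hQ hv.1)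
    (by simp [zero_mem_vertexCone hv.1 hwQ])
    (fun y hy hy0 => lt_zero_of_mem_vertexCone hfP hfQ (Set.mem_of_indicator_ne_zero hy) hy0)
    fun m => ?_
  calc single (d • v) 1 * A * t (m + d)
      = single (-(m • v + w)) 1 * (A * intPtTransform (((m + d : ℕ) : ℝ) • P + Q)) := by
        rw [mul_right_comm, ht_shift]; ring
    _ = ∑ i ∈ s, single (e i • v) 1 * B i * t (m + e i) := by
        rw [h, Finset.mul_sum]
        exact Finset.sum_congr rfl fun i _ => by rw [mul_right_comm, ht_shift]; ring

theorem exists_mul_eq_of_isFractionRing {R A K ι : Type*} [CommRing R] [Nontrivial R]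
    [CommRing K] [Algebra R K] [IsFractionRing R K] (φ : A → K)
    (hφ : ∀ r, ∃ a, φ a = algebraMap R K r) (s : Finset ι) (c : ι → K) :
    ∃ q, φ q ≠ 0 ∧ ∃ p : ι → A, ∀ j ∈ s, φ (p j) = c j * φ q := by
  obtain ⟨b, hb⟩ := IsLocalization.exist_integer_multiples (nonZeroDivisors R) s c
  choose! r hr using hb
  choose a ha using hφ
  refine ⟨a b, ?_, a ∘ r, fun j hj => ?_⟩
  · rw [ha]; exact IsFractionRing.to_map_ne_zero_of_mem_nonZeroDivisors b.2
  · rw [Function.comp_apply, ha, ha, hr j hj, Algebra.smul_def, mul_comm]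

theorem exists_eq_algebraMap_of_map_monomial {R K : Type*} [CommSemiring R] [CommSemiring K]
    [Algebra R K] {n : ℕ} [Algebra (MvPolynomial (Fin n) R) K]
    [IsScalarTower R (MvPolynomial (Fin n) R) K] (ι : AddMonoidAlgebra R (Fin n → ℤ) →ₐ[R] K)
    (hmon : ∀ m : Fin n → ℕ, ι (AddMonoidAlgebra.single (fun i => (m i : ℤ)) 1) =
      algebraMap (MvPolynomial (Fin n) R) K
        (MvPolynomial.monomial (Finsupp.equivFunOnFinite.symm m) 1))
    (p : MvPolynomial (Fin n) R) : ∃ a, ι a = algebraMap _ K p := by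
  let ψ := MvPolynomial.aeval (R := R) fun i =>
    AddMonoidAlgebra.single (fun j => ((Pi.single i 1 : Fin n → ℕ) j : ℤ)) (1 : R)
  have hψ : ι.comp ψ = IsScalarTower.toAlgHom R (MvPolynomial (Fin n) R) K := by
    refine MvPolynomial.algHom_ext fun i => ?_
    rw [AlgHom.comp_apply, MvPolynomial.aeval_X, hmon, ← Finsupp.equivFunOnFinite_single,
      Equiv.symm_apply_apply]
    rfl
  exact ⟨ψ p, AlgHom.congr_fun hψ p⟩

theorem char_poly_minimal_general {n : ℕ}
    (P Q : Set (Fin n → ℝ))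
    (hPlat : IsLatticePolytope P)
    (hQlat : IsLatticePolytope Q) (hQne : Q.Nonempty)
    (V : Finset (Fin n → ℤ)) (hV : latC '' (V : Set (Fin n → ℤ)) = Set.extremePoints ℝ P)
    (ι : AddMonoidAlgebra ℂ (Fin n → ℤ) →ₐ[ℂ] FractionRing (MvPolynomial (Fin n) ℂ))
    (hinj : Function.Injective ι)
    (hmon : ∀ m : Fin n → ℕ,
      ι (AddMonoidAlgebra.single (fun i => (m i : ℤ)) 1) =
        algebraMap (MvPolynomial (Fin n) ℂ) (FractionRing (MvPolynomial (Fin n) ℂ))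
          (MvPolynomial.monomial (Finsupp.equivFunOnFinite.symm m) 1))
    (d : ℕ) (c : ℕ → FractionRing (MvPolynomial (Fin n) ℂ))
    (hrec : ∀ k : ℕ,
      ι (intPtTransform (((k + d : ℕ) : ℝ) • P + Q)) =
        ∑ j ∈ Finset.Icc 1 d, c j * ι (intPtTransform (((k + d - j : ℕ) : ℝ) • P + Q))) :
    (∏ v ∈ V, (Polynomial.X - Polynomial.C (ι (AddMonoidAlgebra.single v 1)))) ∣
      (Polynomial.X ^ d - ∑ j ∈ Finset.Icc 1 d, Polynomial.C (c j) * Polynomial.X ^ (d - j)) := by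
  obtain ⟨q, hq, p, hp⟩ := exists_mul_eq_of_isFractionRing ι
    (exists_eq_algebraMap_of_map_monomial ι hmon) (Finset.Icc 1 d) c
  have hrec' (k : ℕ) : q * intPtTransform (((k + d : ℕ) : ℝ) • P + Q) =
      ∑ j ∈ Finset.Icc 1 d, p j * intPtTransform (((k + (d - j) : ℕ) : ℝ) • P + Q) := by
    refine hinj ?_
    rw [map_mul, hrec, map_sum, Finset.mul_sum]
    refine Finset.sum_congr rfl fun j hj => ?_
    rw [map_mul, hp j hj, ← Nat.add_sub_assoc (Finset.mem_Icc.mp hj).2]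
    ring
  have hpow (e : ℕ) (v : Fin n → ℤ) :
      ι (AddMonoidAlgebra.single (e • v) 1) = ι (AddMonoidAlgebra.single v 1) ^ e := by
    rw [← map_pow, AddMonoidAlgebra.single_pow, one_pow]
  refine Finset.prod_dvd_of_coprime ((Polynomial.pairwise_coprime_X_sub_C
    (hinj.comp (AddMonoidAlgebra.single_left_injective one_ne_zero))).set_pairwise _)
    fun v hv => Polynomial.dvd_iff_isRoot.mpr ?_
  have hvertex := congrArg ι (single_nsmul_mul_eq_sum_of_recurrence hPlat hQlat hQne
    (hV ▸ Set.mem_image_of_mem latC hv) hrec')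
  simp only [map_mul, map_sum, hpow] at hvertex
  refine (mul_eq_zero.mp ?_).resolve_right hq
  simp only [Polynomial.eval_sub, Polynomial.eval_pow, Polynomial.eval_X, Polynomial.eval_finsetSum,
    Polynomial.eval_mul, Polynomial.eval_C, sub_mul, Finset.sum_mul, sub_eq_zero]
  rw [hvertex]
  exact Finset.sum_congr rfl fun j hj => by rw [hp j hj]; ring

theorem char_poly_minimal {n : ℕ}
    (P Q : Set (Fin n → ℝ))
    (hPlat : IsLatticePolytope P) (hPne : P.Nonempty)
    (hQlat : IsLatticePolytope Q) (hQne : Q.Nonempty)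
    (V : Finset (Fin n → ℤ)) (hV : latC '' (V : Set (Fin n → ℤ)) = Set.extremePoints ℝ P)
    (ι : AddMonoidAlgebra ℂ (Fin n → ℤ) →ₐ[ℂ] FractionRing (MvPolynomial (Fin n) ℂ))
    (hinj : Function.Injective ι)
    (hmon : ∀ m : Fin n → ℕ,
      ι (AddMonoidAlgebra.single (fun i => (m i : ℤ)) 1) =
        algebraMap (MvPolynomial (Fin n) ℂ) (FractionRing (MvPolynomial (Fin n) ℂ))
          (MvPolynomial.monomial (Finsupp.equivFunOnFinite.symm m) 1))
    (d : ℕ) (hd : 1 ≤ d) (c : ℕ → FractionRing (MvPolynomial (Fin n) ℂ)) (hcd : c d ≠ 0)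
    (hrec : ∀ k : ℕ,
      ι (intPtTransform (((k + d : ℕ) : ℝ) • P + Q)) =
        ∑ j ∈ Finset.Icc 1 d, c j * ι (intPtTransform (((k + d - j : ℕ) : ℝ) • P + Q))) :
    (∏ v ∈ V, (Polynomial.X - Polynomial.C (ι (AddMonoidAlgebra.single v 1)))) ∣
      (Polynomial.X ^ d - ∑ j ∈ Finset.Icc 1 d, Polynomial.C (c j) * Polynomial.X ^ (d - j)) :=
  char_poly_minimal_general P Q hPlat hQlat hQne V hV ι hinj hmon d c hrec
end
end

section
/- Let P ⊆ ℝ^n be a nonempty polytope with vertex set V(P) = {v_1, …, v_r} (r distinct vertices). Then for every integer k ≥ 0 the identity of indicator functions 𝟙_{(k+r)P} = Σ_{∅≠I⊆[r]} (−1)^{1+|I|} · 𝟙_{(k+r−|I|)P + Σ_{i∈I} v_i} holds pointwise on ℝ^n (as real-valued functions), where (k+r−|I|)P + Σ_{i∈I} v_i denotes the translate of the dilate (k+r−|I|)P by the vector Σ_{i∈I} v_i. -/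
open scoped BigOperators Pointwise

noncomputable section

/-!
A point of `c • P + {∑ i ∈ I, v i}` is `∑ i, ν i • v i` for a weight vector `ν ≥ 0` with
`∑ i, ν i = c + #I` and `ν i ≥ 1` on `I`; so the `I`-th set contains `x` iff
`R_I := representations v (k + r) x I` is nonempty, and each `R_I` is compact and convex. For a
fixed `ν`, the `I` with `ν ∈ R_I` are the subsets of `{i | 1 ≤ ν i}`, which is nonempty since
`∑ i, ν i = k + r ≥ r`; hence `∑ I, (-1) ^ #I • 𝟙_{R_I}` vanishes identically. The Euler
characteristic, which is `1` on nonempty compact convex sets and respects linear relations between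
their indicators, turns this into `∑ I, (-1) ^ #I • [R_I ≠ ∅] = 0`, which is the claim.

Plain inclusion–exclusion does not suffice: for a square, `R_{1}` and `R_{2}` can both be nonempty
while `R_{1,2}` is empty. That the Euler characteristic is well defined is Hadwiger's slicing
induction on the dimension; in dimension one, the coefficients of the intervals ending at `t` are
read off from the jump of `∑ i, c i • 𝟙_{K i}` at `t` from the right.
-/
open Set Filter Topology Finset

theorem eventually_nhdsGT_mem_Icc_iff (a b t : ℝ) :
    ∀ᶠ u in 𝓝[>] t, u ∈ Set.Icc a b ↔ t ∈ Set.Ico a b := by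
  have hlt : ∀ e, ∀ᶠ u in 𝓝[>] t, t < e → u < e := fun e =>
    eventually_imp_distrib_left.2 fun h => nhdsWithin_le_nhds (eventually_lt_nhds h)
  filter_upwards [self_mem_nhdsWithin, hlt a, hlt b] with u (htu : t < u) ha hb
  simp only [Set.mem_Icc, Set.mem_Ico]
  constructor
  · rintro ⟨hau, hub⟩
    exact ⟨not_lt.1 fun h => (ha h).not_ge hau, htu.trans_le hub⟩
  · rintro ⟨hat, htb⟩
    exact ⟨hat.trans htu.le, (hb htb).le⟩

theorem sum_eq_zero_of_forall_sum_filter_mem_Icc_eq_zero {ι : Type*} (s : Finset ι)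
    (a b c : ι → ℝ) (hab : ∀ i ∈ s, a i ≤ b i)
    (h : ∀ t, ∑ i ∈ s with t ∈ Set.Icc (a i) (b i), c i = 0) :
    ∑ i ∈ s, c i = 0 := by
  classical
  have hfiber : ∀ t, ∑ i ∈ s with b i = t, c i = 0 := by
    intro t
    obtain ⟨u, hu⟩ :=
      ((eventually_all_finset s).2 fun i _ => eventually_nhdsGT_mem_Icc_iff (a i) (b i) t).exists
    have hinterior : {i ∈ s | t ∈ Set.Icc (a i) (b i) ∧ t < b i} =
        {i ∈ s | u ∈ Set.Icc (a i) (b i)} :=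
      filter_congr fun i hi => by
        rw [hu i hi]
        exact ⟨fun ⟨⟨hat, _⟩, htb⟩ => ⟨hat, htb⟩, fun ⟨hat, htb⟩ => ⟨⟨hat, htb.le⟩, htb⟩⟩
    have hright : {i ∈ s | t ∈ Set.Icc (a i) (b i) ∧ ¬t < b i} = {i ∈ s | b i = t} := by
      refine filter_congr fun i hi => ⟨fun ⟨⟨_, htb⟩, hbt⟩ => le_antisymm (not_lt.1 hbt) htb, ?_⟩
      rintro rfl
      exact ⟨⟨hab i hi, le_rfl⟩, lt_irrefl _⟩
    have hsplit := sum_filter_add_sum_filter_not {i ∈ s | t ∈ Set.Icc (a i) (b i)} (t < b ·) c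
    rwa [h t, filter_filter, filter_filter, hinterior, hright, h u, zero_add] at hsplit
  rw [← sum_fiberwise_of_maps_to (fun i hi => mem_image_of_mem b hi)]
  exact sum_eq_zero fun t _ => hfiber t

universe u

open Classical in
/-- Every linear relation between indicator functions of compact convex sets is also satisfied by
the values `χ(K) = [K ≠ ∅]`, i.e. the Euler characteristic is well defined on their span. -/
def HasEulerCharacteristic (E : Type*) [AddCommGroup E] [Module ℝ E] [TopologicalSpace E] :
    Prop :=
  ∀ {ι : Type u} (s : Finset ι) (K : ι → Set E) (c : ι → ℝ),
    (∀ i ∈ s, Convex ℝ (K i) ∧ IsCompact (K i)) → (∀ z, ∑ i ∈ s with z ∈ K i, c i = 0) →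
      ∑ i ∈ s with (K i).Nonempty, c i = 0

theorem hasEulerCharacteristic_real : HasEulerCharacteristic.{u} ℝ := by
  classical
  intro ι s K c hK h
  have hIcc : ∀ i ∈ s, (K i).Nonempty → K i = Set.Icc (sInf (K i)) (sSup (K i)) :=
    fun i hi hne => eq_Icc_of_connected_compact ((hK i hi).1.isConnected hne) (hK i hi).2
  refine sum_eq_zero_of_forall_sum_filter_mem_Icc_eq_zero _ (fun i => sInf (K i))
    (fun i => sSup (K i)) c (fun i hi => ?_) fun t => ?_
  · obtain ⟨hi, hne⟩ := mem_filter.1 hi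
    exact Set.nonempty_Icc.1 (hIcc i hi hne ▸ hne)
  · rw [← h t, filter_filter]
    refine sum_congr (filter_congr fun i hi => ?_) fun _ _ => rfl
    exact ⟨fun ⟨hne, ht⟩ => hIcc i hi hne ▸ ht, fun ht => ⟨⟨t, ht⟩, hIcc i hi ⟨t, ht⟩ ▸ ht⟩⟩

theorem hasEulerCharacteristic_of_subsingleton (E : Type*) [AddCommGroup E] [Module ℝ E]
    [TopologicalSpace E] [Subsingleton E] : HasEulerCharacteristic.{u} E := by
  classical
  intro ι s K c _ h
  rw [← h 0]
  exact sum_congr (filter_congr fun i _ =>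
    ⟨fun ⟨z, hz⟩ => Subsingleton.elim z 0 ▸ hz, fun hz => ⟨0, hz⟩⟩) fun _ _ => rfl

theorem HasEulerCharacteristic.congr {E F : Type*} [AddCommGroup E] [Module ℝ E]
    [TopologicalSpace E] [AddCommGroup F] [Module ℝ F] [TopologicalSpace F]
    (hE : HasEulerCharacteristic.{u} E) (e : E ≃L[ℝ] F) : HasEulerCharacteristic.{u} F := by
  classical
  intro ι s K c hK h
  rw [filter_congr fun i _ => e.surjective.nonempty_preimage.symm]
  exact hE s (fun i => e ⁻¹' K i) c (fun i hi => ⟨(hK i hi).1.linear_preimage (e : E →ₗ[ℝ] F),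
    e.toHomeomorph.isCompact_preimage.2 (hK i hi).2⟩) fun z => h (e z)

theorem HasEulerCharacteristic.real_prod {F : Type*} [AddCommGroup F] [Module ℝ F]
    [TopologicalSpace F] [T2Space F] (hF : HasEulerCharacteristic.{u} F) :
    HasEulerCharacteristic.{u} (ℝ × F) := by
  classical
  intro ι s K c hK h
  have hslice : ∀ i ∈ s, ∀ t, Convex ℝ (Prod.mk t ⁻¹' K i) ∧ IsCompact (Prod.mk t ⁻¹' K i) := by
    intro i hi t
    refine ⟨fun y hy y' hy' a b ha hb hab => ?_, ?_⟩
    · have := (hK i hi).1 hy hy' ha hb hab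
      rwa [Prod.smul_mk, Prod.smul_mk, Prod.mk_add_mk, Convex.combo_self hab] at this
    · exact ((hK i hi).2.image continuous_snd).of_isClosed_subset
        ((hK i hi).2.isClosed.preimage (Continuous.prodMk_right t)) fun y hy => ⟨_, hy, rfl⟩
  have hfst : ∀ t, ∑ i ∈ s with t ∈ Prod.fst '' K i, c i = 0 := by
    intro t
    rw [← hF s (fun i => Prod.mk t ⁻¹' K i) c (fun i hi => hslice i hi t) fun y => h (t, y)]
    refine sum_congr (filter_congr fun i _ => ?_) fun _ _ => rfl
    exact ⟨fun ⟨z, hz, hzt⟩ => ⟨z.2, by rwa [← hzt]⟩, fun ⟨y, hy⟩ => ⟨_, hy, rfl⟩⟩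
  rw [filter_congr fun i _ => Set.image_nonempty.symm]
  exact hasEulerCharacteristic_real s (fun i => Prod.fst '' K i) c
    (fun i hi => ⟨(hK i hi).1.linear_image (LinearMap.fst ℝ ℝ F),
      (hK i hi).2.image continuous_fst⟩) hfst

theorem hasEulerCharacteristic_pi_fin (N : ℕ) : HasEulerCharacteristic.{u} (Fin N → ℝ) := by
  induction N with
  | zero => exact hasEulerCharacteristic_of_subsingleton _
  | succ N ih =>
    exact HasEulerCharacteristic.congr ih.real_prod (Fin.consEquivL ℝ fun _ => ℝ)

section Representations

variable {ι E : Type*} [Fintype ι] [AddCommGroup E] [Module ℝ E]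

theorem smul_stdSimplex [Nonempty ι] {c : ℝ} (hc : 0 ≤ c) :
    c • stdSimplex ℝ ι = {μ : ι → ℝ | 0 ≤ μ ∧ ∑ i, μ i = c} := by
  classical
  rcases hc.eq_or_lt with rfl | hc
  · rw [zero_smul_set ⟨_, single_mem_stdSimplex ℝ (Classical.arbitrary ι)⟩]
    ext μ
    refine ⟨by rintro rfl; simp, fun ⟨hμ, hsum⟩ => ?_⟩
    exact funext ((sum_eq_zero_iff_of_nonneg fun i _ => hμ i).1 hsum · (mem_univ _))
  · ext μ
    rw [mem_smul_set_iff_inv_smul_mem₀ hc.ne']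
    simp only [stdSimplex, Set.mem_ofPred_eq, Pi.smul_apply, smul_eq_mul, ← mul_sum,
      inv_mul_eq_one₀ hc.ne', eq_comm (a := c), Pi.le_def, Pi.zero_apply]
    exact and_congr_left' (forall_congr' fun i => by
      rw [mul_nonneg_iff_of_pos_left (inv_pos.2 hc)])

theorem smul_convexHull_range_eq_image [Nonempty ι] (v : ι → E) {c : ℝ} (hc : 0 ≤ c) :
    c • convexHull ℝ (range v) =
      (fun μ => ∑ i, μ i • v i) '' {μ : ι → ℝ | 0 ≤ μ ∧ ∑ i, μ i = c} := by
  classical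
  have hΔ : convexHull ℝ (range v) = Fintype.linearCombination ℝ v '' stdSimplex ℝ ι := by
    rw [← convexHull_rangle_single_eq_stdSimplex, LinearMap.image_convexHull, ← range_comp]
    congr
    ext i
    simp
  rw [hΔ, ← image_smul_set, smul_stdSimplex hc]
  rfl

def representations (v : ι → E) (c : ℝ) (x : E) (I : Finset ι) : Set (ι → ℝ) :=
  {ν | (I : Set ι).indicator 1 ≤ ν ∧ ∑ i, ν i = c ∧ ∑ i, ν i • v i = x}

theorem mem_smul_convexHull_add_singleton_iff [Nonempty ι] (v : ι → E) {c : ℝ} (hc : 0 ≤ c)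
    (x : E) (I : Finset ι) :
    x ∈ c • convexHull ℝ (range v) + {∑ i ∈ I, v i} ↔
      (representations v (c + I.card) x I).Nonempty := by
  set e : ι → ℝ := (I : Set ι).indicator 1
  have he_sum : ∑ i, e i = I.card := by
    rw [sum_indicator_subset _ (subset_univ I)]
    simp
  have he_comb : ∑ i, e i • v i = ∑ i ∈ I, v i := by
    simp_rw [e, ← Set.indicator_smul_apply_left, sum_indicator_subset _ (subset_univ I),
      Pi.one_apply, one_smul]
  rw [Set.add_singleton, smul_convexHull_range_eq_image v hc, Set.image_image]
  constructor
  · rintro ⟨μ, ⟨hμ, hsum⟩, rfl⟩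
    refine ⟨μ + e, le_add_of_nonneg_left hμ, ?_, ?_⟩
    · simp [sum_add_distrib, hsum, he_sum]
    · simp [add_smul, sum_add_distrib, he_comb]
  · rintro ⟨ν, hν, hsum, rfl⟩
    refine ⟨ν - e, ⟨sub_nonneg.2 hν, ?_⟩, ?_⟩
    · simp [sum_sub_distrib, hsum, he_sum]
    · simp [sub_smul, sum_sub_distrib, he_comb]

theorem convex_representations (v : ι → E) (c : ℝ) (x : E) (I : Finset ι) :
    Convex ℝ (representations v c x I) :=
  have hsum : IsLinearMap ℝ fun ν : ι → ℝ => ∑ i, ν i :=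
    ⟨fun _ _ => sum_add_distrib, fun _ _ => by simp only [Pi.smul_apply, smul_sum]⟩
  (convex_Ici _).inter (((convex_singleton c).is_linear_preimage hsum).inter
    ((convex_singleton x).is_linear_preimage (Fintype.linearCombination ℝ v).isLinear))

theorem isCompact_representations [TopologicalSpace E] [ContinuousAdd E] [ContinuousSMul ℝ E]
    [T2Space E] (v : ι → E) (c : ℝ) (x : E) (I : Finset ι) :
    IsCompact (representations v c x I) := by
  have hnonneg : ∀ ν ∈ representations v c x I, 0 ≤ ν := fun ν hν i =>
    (Set.indicator_nonneg (fun _ _ => zero_le_one) i).trans (hν.1 i)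
  refine (isCompact_Icc (a := 0) (b := fun _ => c)).of_isClosed_subset ?_ fun ν hν =>
    ⟨hnonneg ν hν, fun i => hν.2.1 ▸ single_le_sum (fun j _ => hnonneg ν hν j) (mem_univ i)⟩
  exact isClosed_Ici.inter ((isClosed_eq (by fun_prop) continuous_const).inter
      (isClosed_eq (by fun_prop) continuous_const))

theorem mem_representations_iff {v : ι → E} {c : ℝ} {x : E} {I : Finset ι} {ν : ι → ℝ} :
    ν ∈ representations v c x I ↔ ν ∈ representations v c x ∅ ∧ ∀ i ∈ I, 1 ≤ ν i := by
  simp only [representations, Set.mem_ofPred_eq, coe_empty, Set.indicator_empty]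
  constructor
  · rintro ⟨hν, hrest⟩
    exact ⟨⟨fun i => (Set.indicator_nonneg (fun _ _ => zero_le_one) i).trans (hν i), hrest⟩,
      fun i hi => by simpa [hi] using hν i⟩
  · rintro ⟨⟨hν, hrest⟩, hI⟩
    refine ⟨fun i => ?_, hrest⟩
    by_cases hi : i ∈ I
    · simpa [hi] using hI i hi
    · simpa [hi] using hν i

open Classical in
theorem sum_filter_mem_representations_eq_zero [Nonempty ι] (v : ι → E) {c : ℝ}
    (hc : Fintype.card ι ≤ c) (x : E) (ν : ι → ℝ) :
    ∑ I ∈ (univ : Finset ι).powerset with ν ∈ representations v c x I, (-1 : ℝ) ^ I.card = 0 := by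
  by_cases h0 : ν ∈ representations v c x ∅
  swap
  · rw [filter_false_of_mem fun I _ hI => h0 (mem_representations_iff.1 hI).1, sum_empty]
  set S : Finset ι := {i | 1 ≤ ν i}
  have hS : S.Nonempty := by
    by_contra! hS
    have hlt : ∑ i, ν i < ∑ _ : ι, (1 : ℝ) :=
      sum_lt_sum_of_nonempty univ_nonempty fun i hi => not_le.1 (filter_eq_empty_iff.1 hS hi)
    simp only [sum_const, card_univ, nsmul_eq_mul, mul_one] at hlt
    linarith [h0.2.1]
  have hpow : {I ∈ (univ : Finset ι).powerset | ν ∈ representations v c x I} = S.powerset := by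
    ext I
    simp [mem_representations_iff, h0, subset_iff, S]
  rw [hpow]
  exact_mod_cast sum_powerset_neg_one_pow_card_of_nonempty hS

end Representations

theorem IsPolytope.eq_convexHull_range {n : ℕ} {P : Set (Fin n → ℝ)} (hP : IsPolytope P)
    {ι : Type*} [Finite ι] {v : ι → Fin n → ℝ} (hvert : extremePoints ℝ P = range v) :
    P = convexHull ℝ (range v) := by
  obtain ⟨F, rfl⟩ := hP
  rw [← closure_convexHull_extremePoints (F.finite_toSet.isCompact_convexHull (𝕜 := ℝ))
    (convex_convexHull ℝ _), hvert, ((finite_range v).isClosed_convexHull (𝕜 := ℝ)).closure_eq]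

theorem sum_neg_one_pow_mul_indicator_eq_zero {E : Type*} [AddCommGroup E] [Module ℝ E]
    [TopologicalSpace E] [ContinuousAdd E] [ContinuousSMul ℝ E] [T2Space E]
    {r : ℕ} (hr : 0 < r) (v : Fin r → E) {m : ℕ} (hm : r ≤ m) (x : E) :
    ∑ I ∈ (univ : Finset (Fin r)).powerset, (-1 : ℝ) ^ I.card *
      (((m - I.card : ℕ) : ℝ) • convexHull ℝ (range v) + {∑ i ∈ I, v i}).indicator
        (fun _ => (1 : ℝ)) x = 0 := by
  classical
  have : Nonempty (Fin r) := Fin.pos_iff_nonempty.1 hr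
  have hmem : ∀ I ∈ (univ : Finset (Fin r)).powerset,
      x ∈ ((m - I.card : ℕ) : ℝ) • convexHull ℝ (range v) + {∑ i ∈ I, v i} ↔
        (representations v m x I).Nonempty := by
    intro I _
    have hI : I.card ≤ m := (card_le_univ I).trans (by simpa using hm)
    rw [mem_smul_convexHull_add_singleton_iff v (Nat.cast_nonneg _), Nat.cast_sub hI,
      sub_add_cancel]
  simp_rw [Set.indicator_apply, mul_ite, mul_one, mul_zero]
  rw [← sum_filter, filter_congr hmem]
  exact hasEulerCharacteristic_pi_fin r _ _ _
    (fun I _ => ⟨convex_representations v m x I, isCompact_representations v m x I⟩)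
    fun ν => sum_filter_mem_representations_eq_zero v (by simpa using hm) x ν

theorem indicator_recursion_general {n r : ℕ}
    (P : Set (Fin n → ℝ)) (hP : IsPolytope P) (hPne : P.Nonempty)
    (v : Fin r → (Fin n → ℝ))
    (hvert : Set.extremePoints ℝ P = Set.range v)
    (k : ℕ) (x : Fin n → ℝ) :
    Set.indicator (((k + r : ℕ) : ℝ) • P) (fun _ => (1 : ℝ)) x =
      ∑ I ∈ (Finset.univ : Finset (Fin r)).powerset.filter (fun I => I.Nonempty),
        (-1 : ℝ) ^ (1 + I.card) *
          Set.indicator (((k + r - I.card : ℕ) : ℝ) • P + {∑ i ∈ I, v i})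
            (fun _ => (1 : ℝ)) x := by
  have hPv := hP.eq_convexHull_range hvert
  have hr : 0 < r := Nat.pos_of_ne_zero fun h => by subst h; simp [hPv] at hPne
  have key := sum_neg_one_pow_mul_indicator_eq_zero hr v (le_add_self : r ≤ k + r) x
  rw [← hPv, ← sum_filter_add_sum_filter_not _ (·.Nonempty)] at key
  have hempty : {I ∈ (univ : Finset (Fin r)).powerset | ¬I.Nonempty} = {∅} := by
    ext I
    simp
  simp only [hempty, sum_singleton, Finset.card_empty, pow_zero, one_mul, Nat.sub_zero, sum_empty,
    Set.singleton_zero, add_zero] at key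
  simp only [add_comm 1, pow_succ, mul_neg_one, neg_mul, sum_neg_distrib]
  linarith

theorem indicator_recursion {n r : ℕ}
    (P : Set (Fin n → ℝ)) (hP : IsPolytope P) (hPne : P.Nonempty)
    (v : Fin r → (Fin n → ℝ)) (hv : Function.Injective v)
    (hvert : Set.extremePoints ℝ P = Set.range v)
    (k : ℕ) (x : Fin n → ℝ) :
    Set.indicator (((k + r : ℕ) : ℝ) • P) (fun _ => (1 : ℝ)) x =
      ∑ I ∈ (Finset.univ : Finset (Fin r)).powerset.filter (fun I => I.Nonempty),
        (-1 : ℝ) ^ (1 + I.card) *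
          Set.indicator (((k + r - I.card : ℕ) : ℝ) • P + {∑ i ∈ I, v i})
            (fun _ => (1 : ℝ)) x :=
  indicator_recursion_general P hP hPne v hvert k x

end
end

section
/- Let u_1, …, u_k ∈ ℤ^n and let K = cone(u_1,…,u_k) = {λ_1 u_1 + ⋯ + λ_k u_k : λ_1,…,λ_k ≥ 0} ⊆ ℝ^n. Assume K is pointed, i.e. K ∩ (−K) = {0}. Let z ∈ (ℂ ∖ {0})^n satisfy |z^{u_i}| < 1 for all i = 1,…,k. Then the family (z^m)_{m ∈ K ∩ ℤ^n} is absolutely summable, i.e. Σ_{m ∈ K ∩ ℤ^n} |z^m| < ∞. -/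
open scoped BigOperators Pointwise

noncomputable section

/-!
Write `|z^m| = exp ℓ(m)` with the linear form `ℓ(x) = ∑ⱼ xⱼ log |zⱼ|`. The hypothesis says that
`ℓ` is negative on the generators of `K`, so by finiteness `ℓ(uᵢ) + ε‖uᵢ‖ ≤ 0` for some `ε > 0`
and all `i`, and then `ℓ(x) ≤ -ε‖x‖` on all of `K`. Hence `|z^m|` is dominated on `K ∩ ℤⁿ` by
`exp(-ε‖m‖)`, which is summable over `ℤⁿ` as it is bounded by a product of two-sided geometric
series.
-/

open Filter Topology

lemma LinearMap.exists_pos_apply_sum_smul_le_neg_mul_norm {ι E : Type*} [Fintype ι]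
    [SeminormedAddCommGroup E] [NormedSpace ℝ E] (f : E →ₗ[ℝ] ℝ) {v : ι → E}
    (hf : ∀ i, f (v i) < 0) :
    ∃ ε > 0, ∀ lam : ι → ℝ, (∀ i, 0 ≤ lam i) →
      f (∑ i, lam i • v i) ≤ -ε * ‖∑ i, lam i • v i‖ := by
  have hnear : ∀ᶠ ε in 𝓝 (0 : ℝ), ∀ i, f (v i) + ε * ‖v i‖ < 0 :=
    eventually_all.2 fun i => Tendsto.eventually_lt_const (by simpa using hf i)
      (tendsto_const_nhds.add (tendsto_id.mul tendsto_const_nhds))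
  obtain ⟨ε, hε, hεpos⟩ :=
    ((hnear.filter_mono nhdsWithin_le_nhds).and (self_mem_nhdsWithin (s := Set.Ioi 0))).exists
  refine ⟨ε, hεpos, fun lam hlam => ?_⟩
  have hnorm : ‖∑ i, lam i • v i‖ ≤ ∑ i, lam i * ‖v i‖ :=
    (norm_sum_le _ _).trans_eq <| Finset.sum_congr rfl fun i _ => by
      rw [norm_smul, Real.norm_of_nonneg (hlam i)]
  calc f (∑ i, lam i • v i) = ∑ i, lam i * f (v i) := by simp
    _ ≤ ∑ i, lam i * (-ε * ‖v i‖) := Finset.sum_le_sum fun i _ =>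
        mul_le_mul_of_nonneg_left (by linarith [hε i]) (hlam i)
    _ = -ε * ∑ i, lam i * ‖v i‖ := by
        rw [Finset.mul_sum]; exact Finset.sum_congr rfl fun i _ => by ring
    _ ≤ -ε * ‖∑ i, lam i • v i‖ := mul_le_mul_of_nonpos_left hnorm (by linarith)

lemma summable_fin_pi_prod_of_nonneg {α : Type*} :
    ∀ {n : ℕ} {f : Fin n → α → ℝ}, (∀ j a, 0 ≤ f j a) → (∀ j, Summable (f j)) →
      Summable (fun x : Fin n → α => ∏ j, f j (x j))
  | 0, _, _, _ => Summable.of_finite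
  | n + 1, f, hf0, hf => by
    have hprod := (hf 0).mul_of_nonneg (summable_fin_pi_prod_of_nonneg (n := n)
      (f := fun j => f j.succ) (fun j => hf0 j.succ) (fun j => hf j.succ))
      (hf0 0) (fun x => Finset.prod_nonneg fun j _ => hf0 j.succ (x j))
    rw [← (Fin.consEquiv fun _ => α).summable_iff]
    refine hprod.congr fun p => ?_
    simp [Fin.consEquiv, Fin.prod_univ_succ]

lemma summable_exp_neg_mul_abs_int {a : ℝ} (ha : 0 < a) :
    Summable (fun x : ℤ => Real.exp (-a * |(x : ℝ)|)) := by
  have hnat : Summable (fun n : ℕ => Real.exp (n * -a)) :=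
    Real.summable_exp_nat_mul_iff.mpr (neg_lt_zero.mpr ha)
  refine Summable.of_nat_of_neg (hnat.congr fun n => ?_) (hnat.congr fun n => ?_) <;>
    simp [mul_comm]

lemma summable_exp_neg_mul_norm_latC (n : ℕ) {ε : ℝ} (hε : 0 < ε) :
    Summable (fun m : Fin n → ℤ => Real.exp (-ε * ‖latC m‖)) := by
  rcases n.eq_zero_or_pos with rfl | hn
  · exact Summable.of_finite
  have hprod := summable_fin_pi_prod_of_nonneg (n := n) (fun _ _ => (Real.exp_pos _).le)
    fun _ => summable_exp_neg_mul_abs_int (div_pos hε (Nat.cast_pos.2 hn))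
  refine hprod.of_nonneg_of_le (fun _ => (Real.exp_pos _).le) fun m => ?_
  rw [← Real.exp_sum, Real.exp_le_exp]
  calc -ε * ‖latC m‖ = ∑ _j : Fin n, -(ε / n) * ‖latC m‖ := by
        rw [Finset.sum_const, Finset.card_univ, Fintype.card_fin, nsmul_eq_mul]
        field_simp
    _ ≤ ∑ j, -(ε / n) * |(m j : ℝ)| := Finset.sum_le_sum fun j _ =>
        mul_le_mul_of_nonpos_left (norm_le_pi_norm (latC m) j)
          (neg_nonpos.2 (div_pos hε (Nat.cast_pos.2 hn)).le)

lemma norm_prod_zpow_eq_exp {n : ℕ} {z : Fin n → ℂ} (hz : ∀ j, z j ≠ 0) (m : Fin n → ℤ) :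
    ‖∏ j, z j ^ m j‖ =
      Real.exp (Fintype.linearCombination ℝ (fun j => Real.log ‖z j‖) (latC m)) := by
  rw [Fintype.linearCombination_apply, norm_prod, Real.exp_sum]
  refine Finset.prod_congr rfl fun j _ => ?_
  rw [norm_zpow, ← Real.rpow_intCast, Real.rpow_def_of_pos (norm_pos_iff.2 (hz j)), latC,
    smul_eq_mul, mul_comm]

theorem cone_monomials_abs_summable_general {n k : ℕ}
    (u : Fin k → (Fin n → ℤ))
    (K : Set (Fin n → ℝ))
    (hK : K = {x | ∃ lam : Fin k → ℝ, (∀ i, 0 ≤ lam i) ∧ x = ∑ i, lam i • latC (u i)})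
    (z : Fin n → ℂ) (hz : ∀ i, z i ≠ 0)
    (hlt : ∀ i : Fin k, ‖∏ j, z j ^ (u i j)‖ < 1) :
    Summable (fun m : {m : Fin n → ℤ | latC m ∈ K} =>
      ‖∏ j, z j ^ ((m : Fin n → ℤ) j)‖) := by
  set ℓ := Fintype.linearCombination ℝ (fun j => Real.log ‖z j‖)
  obtain ⟨ε, hε, hcone⟩ := ℓ.exists_pos_apply_sum_smul_le_neg_mul_norm (v := fun i => latC (u i))
    fun i => by simpa [norm_prod_zpow_eq_exp hz] using hlt i
  refine ((summable_exp_neg_mul_norm_latC n hε).subtype _).of_nonneg_of_le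
    (fun _ => norm_nonneg _) ?_
  rintro ⟨m, hm⟩
  rw [hK] at hm
  obtain ⟨lam, hlam, hm⟩ := hm
  simp only [Function.comp_apply, norm_prod_zpow_eq_exp hz, hm, Real.exp_le_exp]
  exact hcone lam hlam

theorem cone_monomials_abs_summable {n k : ℕ}
    (u : Fin k → (Fin n → ℤ))
    (K : Set (Fin n → ℝ))
    (hK : K = {x | ∃ lam : Fin k → ℝ, (∀ i, 0 ≤ lam i) ∧ x = ∑ i, lam i • latC (u i)})
    (hpointed : ∀ x ∈ K, -x ∈ K → x = 0)
    (z : Fin n → ℂ) (hz : ∀ i, z i ≠ 0)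
    (hlt : ∀ i : Fin k, ‖∏ j, z j ^ (u i j)‖ < 1) :
    Summable (fun m : {m : Fin n → ℤ | latC m ∈ K} =>
      ‖∏ j, z j ^ ((m : Fin n → ℤ) j)‖) :=
  cone_monomials_abs_summable_general u K hK z hz hlt
end
end

section
/- Let n ≥ 1 and let κ, λ, μ, ν be partitions of length at most n such that μ_i ≤ λ_i for all i and ν_i + kμ_i ≤ κ_i + kλ_i for all i, for some positive integer k. Let T = GT_{λ/μ} ∩ ℤ^{(n+1)×n} be the (finite) set of integral Gelfand–Tsetlin patterns of shape λ/μ, and set N = #T. Then there exists an integer r ≥ 0 such that for all l ≥ r: s_{(κ+(l+N)λ)/(ν+(l+N)μ)}(x) = Σ_{∅≠S⊆T} (−1)^{1+|S|} · x^{Σ_{p∈S} w(p)} · s_{(κ+(l+N−|S|)λ)/(ν+(l+N−|S|)μ)}(x); that is, the sequence {s_{(κ+lλ)/(ν+lμ)}(x)}_{l≥r} satisfies a linear recursion with characteristic polynomial ∏_{p∈T} (X − x^{w(p)}). -/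
open scoped BigOperators Pointwise

noncomputable section

/-- The Gelfand–Tsetlin polytope of shape `λ/μ`: arrays with top row `λ` and bottom row `μ`
(written in weakly increasing order) that weakly increase in north-east and south-east
direction. -/
def GTPolytope (n : ℕ) (lam mu : Fin n → ℕ) : Set (Fin (n + 1) → Fin n → ℝ) :=
  {x | (∀ j : Fin n, x 0 j = (lam j.rev : ℝ)) ∧
       (∀ j : Fin n, x (Fin.last n) j = (mu j.rev : ℝ)) ∧
       (∀ (i j : Fin n), x i.succ j ≤ x i.castSucc j) ∧
       (∀ (i j : Fin n) (h : (j : ℕ) + 1 < n), x i.castSucc j ≤ x i.succ ⟨(j : ℕ) + 1, h⟩)}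

/-- The weight of a (real) Gelfand–Tsetlin pattern. -/
def gtWeight {n : ℕ} (x : Fin (n + 1) → Fin n → ℝ) : Fin n → ℝ :=
  fun i => ∑ j, (x i.castSucc j - x i.succ j)

/-- The weight of an integral Gelfand–Tsetlin pattern. -/
def gtWeightInt {n : ℕ} (p : Fin (n + 1) → Fin n → ℤ) : Fin n → ℤ :=
  fun i => ∑ j, (p i.castSucc j - p i.succ j)

/-- Coercion of an integral pattern to a real one. -/
def patC {n : ℕ} (p : Fin (n + 1) → Fin n → ℤ) : Fin (n + 1) → Fin n → ℝ :=
  fun i j => (p i j : ℝ)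

/-- The skew Schur polynomial `s_{λ/μ} = ∑_p x^{w(p)}`, the sum over all integral
Gelfand–Tsetlin patterns of shape `λ/μ`. -/
def skewSchur (n : ℕ) (lam mu : Fin n → ℕ) : MvPolynomial (Fin n) ℂ :=
  ∑ᶠ p ∈ {p : Fin (n + 1) → Fin n → ℤ | patC p ∈ GTPolytope n lam mu},
    MvPolynomial.monomial (Finsupp.equivFunOnFinite.symm (fun i => (gtWeightInt p i).toNat)) (1 : ℂ)


/-!
Write `s_c` for the skew Schur polynomial of shape `(κ + cλ)/(ν + cμ)`. Patterns of these shapes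
add, so `∑_{S ⊆ T} (-1)^{|S|} x^{w(S)} s_{m-|S|}` is a sum over the patterns `Q` of level `m` of
`x^{w(Q)}` times a signed count of those `S ⊆ T` for which `Q - ∑ S` is a pattern of level
`m - |S|`. The count vanishes because toggling a suitable `p₀ ∈ T` in `S` is a sign-reversing
involution: choose `p₀` with zero slack at every inequality where `Q` has slack below the total
slack of `T`; at all other inequalities `Q` has room to subtract any subset of `T`.

Such a `p₀` exists once `m` is large. If patterns of arbitrarily large level `m` have bounded
slack on a set `E` of inequalities, their rescalings by `1/m` accumulate, by compactness, at a
real point of `GT_{λ/μ}` with zero slack on `E`; rounding its entries down gives an integral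
pattern with zero slack on `E`.
-/

open Filter Finset

/-- Indexes the defining inequalities of a Gelfand–Tsetlin pattern `x`: `inl (i, j)` stands for
`x (i+1) j ≤ x i j` and `inr (i, j)` (for `j + 1 < n`) for `x i j ≤ x (i+1) (j+1)`. -/
abbrev GTConstraint (n : ℕ) := (Fin n × Fin n) ⊕ {ij : Fin n × Fin n // (ij.2 : ℕ) + 1 < n}

namespace GTConstraint

variable {n : ℕ}

def lower : GTConstraint n → Fin (n + 1) × Fin n
  | .inl (i, j) => (i.succ, j)
  | .inr ⟨(i, j), _⟩ => (i.castSucc, j)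

def upper : GTConstraint n → Fin (n + 1) × Fin n
  | .inl (i, j) => (i.castSucc, j)
  | .inr ⟨(i, j), h⟩ => (i.succ, ⟨j + 1, h⟩)

end GTConstraint

section Patterns

variable {n : ℕ} {R : Type*}

def entry [CommRing R] (ij : Fin (n + 1) × Fin n) : (Fin (n + 1) → Fin n → R) →ₗ[R] R :=
  LinearMap.proj (φ := fun _ : Fin n => R) ij.2 ∘ₗ
    LinearMap.proj (φ := fun _ : Fin (n + 1) => Fin n → R) ij.1

def slack [CommRing R] (e : GTConstraint n) : (Fin (n + 1) → Fin n → R) →ₗ[R] R :=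
  entry e.upper - entry e.lower

@[simp]
lemma slack_apply [CommRing R] (e : GTConstraint n) (x : Fin (n + 1) → Fin n → R) :
    slack e x = x e.upper.1 e.upper.2 - x e.lower.1 e.lower.2 :=
  rfl

structure IsGTPattern [LE R] (a b : Fin n → R) (x : Fin (n + 1) → Fin n → R) : Prop where
  top : ∀ j, x 0 j = a j.rev
  bottom : ∀ j, x (Fin.last n) j = b j.rev
  lower_le_upper : ∀ e : GTConstraint n, x e.lower.1 e.lower.2 ≤ x e.upper.1 e.upper.2

namespace IsGTPattern

variable {a b c d : Fin n → R} {x y : Fin (n + 1) → Fin n → R}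

lemma succ_le [LE R] (h : IsGTPattern a b x) (i j : Fin n) : x i.succ j ≤ x i.castSucc j :=
  h.lower_le_upper (.inl (i, j))

lemma le_top [Preorder R] (h : IsGTPattern a b x) (i : Fin (n + 1)) (j : Fin n) :
    x i j ≤ a j.rev := by
  induction i using Fin.induction with
  | zero => exact (h.top j).le
  | succ i ih => exact (h.succ_le i j).trans ih

lemma bottom_le [Preorder R] (h : IsGTPattern a b x) (i : Fin (n + 1)) (j : Fin n) :
    b j.rev ≤ x i j := by
  induction i using Fin.reverseInduction with
  | last => exact (h.bottom j).ge
  | cast i ih => exact ih.trans (h.succ_le i j)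

lemma slack_nonneg [CommRing R] [PartialOrder R] [IsOrderedRing R] (h : IsGTPattern a b x)
    (e : GTConstraint n) : 0 ≤ slack e x :=
  sub_nonneg.2 (h.lower_le_upper e)

lemma map {S : Type*} [Preorder R] [Preorder S] {f : R → S} (hf : Monotone f)
    (h : IsGTPattern a b x) :
    IsGTPattern (f ∘ a) (f ∘ b) (fun i j => f (x i j)) where
  top j := by simp [h.top j]
  bottom j := by simp [h.bottom j]
  lower_le_upper e := hf (h.lower_le_upper e)

lemma zero [AddCommMonoid R] [Preorder R] : IsGTPattern (0 : Fin n → R) 0 0 :=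
  ⟨fun _ => rfl, fun _ => rfl, fun _ => le_rfl⟩

lemma add [AddCommMonoid R] [PartialOrder R] [IsOrderedAddMonoid R] (hx : IsGTPattern a b x)
    (hy : IsGTPattern c d y) : IsGTPattern (a + c) (b + d) (x + y) where
  top j := by simp [hx.top j, hy.top j]
  bottom j := by simp [hx.bottom j, hy.bottom j]
  lower_le_upper e := add_le_add (hx.lower_le_upper e) (hy.lower_le_upper e)

lemma sub [CommRing R] [PartialOrder R] [IsOrderedRing R] (hx : IsGTPattern (a + c) (b + d) x)
    (hy : IsGTPattern c d y) (hslack : ∀ e, slack e y ≤ slack e x) :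
    IsGTPattern a b (x - y) where
  top j := by simp [hx.top j, hy.top j]
  bottom j := by simp [hx.bottom j, hy.bottom j]
  lower_le_upper e := by
    have := hslack e
    simp only [slack_apply, Pi.sub_apply, sub_le_sub_iff] at this ⊢
    exact (add_comm _ _).trans_le this

lemma sum [AddCommMonoid R] [PartialOrder R] [IsOrderedAddMonoid R] {ι : Type*}
    {s : Finset ι} {a b : ι → Fin n → R} {x : ι → Fin (n + 1) → Fin n → R}
    (h : ∀ k ∈ s, IsGTPattern (a k) (b k) (x k)) :
    IsGTPattern (∑ k ∈ s, a k) (∑ k ∈ s, b k) (∑ k ∈ s, x k) := by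
  classical
  induction s using Finset.induction_on with
  | empty => simpa using zero
  | insert k s hk ih =>
    simp only [sum_insert hk]
    exact (h k (mem_insert_self k s)).add (ih fun k hk => h k (mem_insert_of_mem hk))

end IsGTPattern

lemma patC_mem_GTPolytope_iff (a b : Fin n → ℕ) (p : Fin (n + 1) → Fin n → ℤ) :
    patC p ∈ GTPolytope n a b ↔ IsGTPattern (Nat.cast ∘ a : Fin n → ℤ) (Nat.cast ∘ b) p := by
  simp only [GTPolytope, patC, Set.mem_ofPred_eq]
  constructor
  · rintro ⟨htop, hbottom, hvert, hdiag⟩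
    refine ⟨fun j => by exact_mod_cast htop j, fun j => by exact_mod_cast hbottom j, ?_⟩
    rintro (⟨i, j⟩ | ⟨⟨i, j⟩, h⟩)
    · exact_mod_cast hvert i j
    · exact_mod_cast hdiag i j h
  · intro hp
    exact ⟨fun j => by exact_mod_cast hp.top j, fun j => by exact_mod_cast hp.bottom j,
      fun i j => by exact_mod_cast hp.lower_le_upper (.inl (i, j)),
      fun i j h => by exact_mod_cast hp.lower_le_upper (.inr ⟨(i, j), h⟩)⟩

end Patterns

section SkewSchur

variable {n : ℕ}

open Classical in
def gtPatterns (a b : Fin n → ℤ) : Finset (Fin (n + 1) → Fin n → ℤ) :=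
  {p ∈ Fintype.piFinset fun _ => Fintype.piFinset fun j => Icc (b j.rev) (a j.rev) |
    IsGTPattern a b p}

lemma mem_gtPatterns {a b : Fin n → ℤ} {p : Fin (n + 1) → Fin n → ℤ} :
    p ∈ gtPatterns a b ↔ IsGTPattern a b p := by
  simp only [gtPatterns, mem_filter, Fintype.mem_piFinset, mem_Icc, and_iff_right_iff_imp]
  exact fun h i j => ⟨h.bottom_le i j, h.le_top i j⟩

lemma gtWeightInt_add (p q : Fin (n + 1) → Fin n → ℤ) (i : Fin n) :
    gtWeightInt (p + q) i = gtWeightInt p i + gtWeightInt q i := by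
  simp only [gtWeightInt, Pi.add_apply, ← sum_add_distrib]
  exact sum_congr rfl fun _ _ => by ring

lemma gtWeightInt_sum {ι : Type*} (s : Finset ι) (p : ι → Fin (n + 1) → Fin n → ℤ) (i : Fin n) :
    gtWeightInt (∑ k ∈ s, p k) i = ∑ k ∈ s, gtWeightInt (p k) i := by
  simp only [gtWeightInt, Finset.sum_apply, sum_sub_distrib]
  rw [sum_comm, sum_comm (s := univ) (t := s)]

lemma IsGTPattern.gtWeightInt_nonneg {a b : Fin n → ℤ} {p : Fin (n + 1) → Fin n → ℤ}
    (h : IsGTPattern a b p) (i : Fin n) : 0 ≤ gtWeightInt p i :=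
  sum_nonneg fun j _ => sub_nonneg.2 (h.succ_le i j)

def gtExponent (p : Fin (n + 1) → Fin n → ℤ) : Fin n →₀ ℕ :=
  Finsupp.equivFunOnFinite.symm fun i => (gtWeightInt p i).toNat

lemma IsGTPattern.natCast_gtExponent {a b : Fin n → ℤ} {p : Fin (n + 1) → Fin n → ℤ}
    (h : IsGTPattern a b p) (i : Fin n) : (gtExponent p i : ℤ) = gtWeightInt p i := by
  simp [gtExponent, h.gtWeightInt_nonneg i]

lemma IsGTPattern.gtExponent_add {a b c d : Fin n → ℤ} {p q : Fin (n + 1) → Fin n → ℤ}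
    (hp : IsGTPattern a b p) (hq : IsGTPattern c d q) :
    gtExponent (p + q) = gtExponent p + gtExponent q := by
  ext i
  apply Nat.cast_injective (R := ℤ)
  simp [(hp.add hq).natCast_gtExponent, hp.natCast_gtExponent, hq.natCast_gtExponent,
    gtWeightInt_add]

lemma gtExponent_sum {a b : Fin n → ℤ} {S : Finset (Fin (n + 1) → Fin n → ℤ)}
    (h : ∀ p ∈ S, IsGTPattern a b p) : gtExponent (∑ p ∈ S, p) = ∑ p ∈ S, gtExponent p := by
  ext i
  apply Nat.cast_injective (R := ℤ)
  rw [(IsGTPattern.sum h).natCast_gtExponent, Finsupp.finsetSum_apply, Nat.cast_sum,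
    gtWeightInt_sum]
  exact sum_congr rfl fun p hp => ((h p hp).natCast_gtExponent i).symm

def intSkewSchur (a b : Fin n → ℤ) : MvPolynomial (Fin n) ℂ :=
  ∑ p ∈ gtPatterns a b, MvPolynomial.monomial (gtExponent p) 1

lemma skewSchur_eq_intSkewSchur (a b : Fin n → ℕ) :
    skewSchur n a b = intSkewSchur (Nat.cast ∘ a) (Nat.cast ∘ b) := by
  rw [skewSchur, intSkewSchur, ← finsum_mem_coe_finset]
  congr! 2 with p
  simp [mem_gtPatterns, patC_mem_GTPolytope_iff, gtExponent]

lemma monomial_gtExponent_mul_intSkewSchur {a b c d : Fin n → ℤ} {s : Fin (n + 1) → Fin n → ℤ}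
    (hs : IsGTPattern c d s) (z : ℂ) :
    MvPolynomial.monomial (gtExponent s) z * intSkewSchur a b =
      ∑ Q ∈ gtPatterns (a + c) (b + d) with Q - s ∈ gtPatterns a b,
        MvPolynomial.monomial (gtExponent Q) z := by
  simp only [intSkewSchur, mul_sum, MvPolynomial.monomial_mul, mul_one]
  refine sum_nbij' (· + s) (· - s) (fun q hq => ?_) (fun Q hQ => (mem_filter.1 hQ).2)
    (fun q _ => add_sub_cancel_right q s) (fun Q _ => sub_add_cancel Q s) (fun q hq => ?_)
  · rw [mem_gtPatterns] at hq
    simpa [mem_gtPatterns] using ⟨hq.add hs, hq⟩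
  · rw [(mem_gtPatterns.1 hq).gtExponent_add hs, add_comm]

end SkewSchur

lemma sum_powerset_filter_neg_one_pow_card_eq_zero {α R : Type*} [DecidableEq α] [Ring R]
    {T : Finset α} {a : α} (ha : a ∈ T) {P : Finset α → Prop} [DecidablePred P]
    (hP : ∀ S ⊆ T.erase a, P (insert a S) ↔ P S) :
    ∑ S ∈ T.powerset with P S, (-1 : R) ^ #S = 0 := by
  rw [sum_filter, ← insert_erase ha, sum_powerset_insert (notMem_erase a T), ← sum_add_distrib]
  refine sum_eq_zero fun S hS => ?_
  have haS : a ∉ S := fun h => notMem_erase a T (mem_powerset.1 hS h)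
  simp only [hP S (mem_powerset.1 hS), card_insert_of_notMem haS]
  split_ifs <;> simp [pow_succ]

section Vanishing

variable {n : ℕ}

lemma sub_sum_insert_mem_gtPatterns_iff {lam mu a b : Fin n → ℤ} {Q p₀ : Fin (n + 1) → Fin n → ℤ}
    {S : Finset (Fin (n + 1) → Fin n → ℤ)} (hp₀ : p₀ ∈ gtPatterns lam mu)
    (hS : S ⊆ (gtPatterns lam mu).erase p₀)
    (htight : ∀ e, slack e Q ≤ ∑ p ∈ gtPatterns lam mu, slack e p → slack e p₀ = 0) :
    Q - ∑ p ∈ insert p₀ S, p ∈ gtPatterns a b ↔ Q - ∑ p ∈ S, p ∈ gtPatterns (a + lam) (b + mu) := by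
  have hp₀S : p₀ ∉ S := fun h => notMem_erase p₀ _ (hS h)
  have hsum : Q - ∑ p ∈ insert p₀ S, p = Q - ∑ p ∈ S, p - p₀ := by
    rw [sum_insert hp₀S]; abel
  rw [mem_gtPatterns] at hp₀
  simp only [hsum, mem_gtPatterns]
  refine ⟨fun h => by simpa using h.add hp₀, fun h => h.sub hp₀ fun e => ?_⟩
  by_cases hQ : slack e Q ≤ ∑ p ∈ gtPatterns lam mu, slack e p
  · exact (htight e hQ).symm ▸ h.slack_nonneg e
  · have hslack_nonneg : ∀ p ∈ gtPatterns lam mu, 0 ≤ slack e p :=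
      fun p hp => (mem_gtPatterns.1 hp).slack_nonneg e
    have hsub : insert p₀ S ⊆ gtPatterns lam mu :=
      insert_subset (mem_gtPatterns.2 hp₀) (hS.trans (erase_subset _ _))
    have := sum_le_sum_of_subset_of_nonneg hsub fun p hp _ => hslack_nonneg p hp
    rw [sum_insert hp₀S] at this
    rw [map_sub, map_sum]
    linarith

lemma sum_powerset_filter_sub_sum_mem_gtPatterns_eq_zero {kap lam mu nu : Fin n → ℤ} {m : ℕ}
    (hm : #(gtPatterns lam mu) ≤ m) {Q p₀ : Fin (n + 1) → Fin n → ℤ}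
    (hp₀ : p₀ ∈ gtPatterns lam mu)
    (htight : ∀ e, slack e Q ≤ ∑ p ∈ gtPatterns lam mu, slack e p → slack e p₀ = 0) :
    ∑ S ∈ (gtPatterns lam mu).powerset with
      Q - ∑ p ∈ S, p ∈ gtPatterns (kap + (m - #S) • lam) (nu + (m - #S) • mu),
      (-1 : ℂ) ^ #S = 0 := by
  refine sum_powerset_filter_neg_one_pow_card_eq_zero hp₀ fun S hS => ?_
  have hcard : #S + 1 ≤ m := (card_lt_card (Finset.ssubset_of_subset_of_ssubset hS
    (erase_ssubset hp₀))).trans_le hm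
  have hlevel : m - #S = m - (#S + 1) + 1 := by omega
  rw [card_insert_of_notMem fun h => notMem_erase p₀ _ (hS h),
    sub_sum_insert_mem_gtPatterns_iff hp₀ hS htight, hlevel, succ_nsmul, succ_nsmul,
    add_assoc, add_assoc]

theorem sum_powerset_gtPatterns_eq_zero {kap lam mu nu : Fin n → ℤ} {m : ℕ}
    (hm : #(gtPatterns lam mu) ≤ m)
    (htight : ∀ Q ∈ gtPatterns (kap + m • lam) (nu + m • mu), ∃ p₀ ∈ gtPatterns lam mu,
      ∀ e, slack e Q ≤ ∑ p ∈ gtPatterns lam mu, slack e p → slack e p₀ = 0) :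
    ∑ S ∈ (gtPatterns lam mu).powerset,
      MvPolynomial.monomial (∑ p ∈ S, gtExponent p) ((-1 : ℂ) ^ #S) *
        intSkewSchur (kap + (m - #S) • lam) (nu + (m - #S) • mu) = 0 := by
  set T := gtPatterns lam mu
  calc _ = ∑ S ∈ T.powerset, ∑ Q ∈ gtPatterns (kap + m • lam) (nu + m • mu) with
          Q - ∑ p ∈ S, p ∈ gtPatterns (kap + (m - #S) • lam) (nu + (m - #S) • mu),
          MvPolynomial.monomial (gtExponent Q) ((-1 : ℂ) ^ #S) := by
        refine sum_congr rfl fun S hS => ?_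
        have hST : ∀ p ∈ S, IsGTPattern lam mu p :=
          fun p hp => mem_gtPatterns.1 (mem_powerset.1 hS hp)
        have hlevel : m - #S + #S = m :=
          Nat.sub_add_cancel ((card_le_card (mem_powerset.1 hS)).trans hm)
        rw [← gtExponent_sum hST, monomial_gtExponent_mul_intSkewSchur (IsGTPattern.sum hST)]
        simp only [sum_const, add_assoc, ← add_smul, hlevel]
    _ = ∑ Q ∈ gtPatterns (kap + m • lam) (nu + m • mu), MvPolynomial.monomial (gtExponent Q)
          (∑ S ∈ T.powerset with
            Q - ∑ p ∈ S, p ∈ gtPatterns (kap + (m - #S) • lam) (nu + (m - #S) • mu),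
            (-1 : ℂ) ^ #S) := by
        simp only [sum_filter, map_sum]
        rw [sum_comm]
        simp only [apply_ite, map_zero]
    _ = 0 := sum_eq_zero fun Q hQ => by
        obtain ⟨p₀, hp₀, hp₀tight⟩ := htight Q hQ
        rw [sum_powerset_filter_sub_sum_mem_gtPatterns_eq_zero hm hp₀ hp₀tight, map_zero]

end Vanishing

section RealPatterns

variable {n : ℕ}

lemma IsGTPattern.smul {R : Type*} [Semiring R] [PartialOrder R] [IsOrderedRing R]
    {a b : Fin n → R} {x : Fin (n + 1) → Fin n → R} (h : IsGTPattern a b x) {t : R}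
    (ht : 0 ≤ t) : IsGTPattern (t • a) (t • b) (t • x) where
  top j := by simp [h.top j]
  bottom j := by simp [h.bottom j]
  lower_le_upper e := mul_le_mul_of_nonneg_left (h.lower_le_upper e) ht

lemma isClosed_setOf_isGTPattern {X : Type*} [TopologicalSpace X] {a b : X → Fin n → ℝ}
    {x : X → Fin (n + 1) → Fin n → ℝ} (ha : Continuous a) (hb : Continuous b)
    (hx : Continuous x) : IsClosed {z | IsGTPattern (a z) (b z) (x z)} := by
  have : {z | IsGTPattern (a z) (b z) (x z)} =
      (⋂ j, {z | x z 0 j = a z j.rev}) ∩ (⋂ j, {z | x z (Fin.last n) j = b z j.rev}) ∩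
        ⋂ e : GTConstraint n, {z | x z e.lower.1 e.lower.2 ≤ x z e.upper.1 e.upper.2} := by
    ext z
    simp only [Set.mem_ofPred_eq, Set.mem_inter_iff, Set.mem_iInter]
    exact ⟨fun h => ⟨⟨h.top, h.bottom⟩, h.lower_le_upper⟩, fun h => ⟨h.1.1, h.1.2, h.2⟩⟩
  rw [this]
  refine ((isClosed_iInter fun j => isClosed_eq ?_ ?_).inter
    (isClosed_iInter fun j => isClosed_eq ?_ ?_)).inter
    (isClosed_iInter fun e => isClosed_le ?_ ?_) <;> fun_prop

/-- Its slice at `t = 1/m` contains the patterns of shape `(κ + mλ)/(ν + mμ)` rescaled by `1/m`;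
its slice at `t = 0` is the face of `GT_{λ/μ}` cut out by `E`. -/
def rescaledPatterns (kap lam mu nu : Fin n → ℝ) (E : Finset (GTConstraint n))
    (θ : GTConstraint n → ℝ) : Set ((Fin (n + 1) → Fin n → ℝ) × ℝ) :=
  {z | z.2 ∈ Set.Icc 0 1 ∧ IsGTPattern (lam + z.2 • kap) (mu + z.2 • nu) z.1 ∧
    ∀ e ∈ E, slack e z.1 ≤ z.2 * θ e}

variable {kap lam mu nu : Fin n → ℝ} {E : Finset (GTConstraint n)} {θ : GTConstraint n → ℝ}

lemma abs_add_mul_le {t : ℝ} (ht : t ∈ Set.Icc 0 1) (u v : ℝ) : |u + t * v| ≤ |u| + |v| :=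
  calc |u + t * v| ≤ |u| + |t * v| := abs_add_le _ _
    _ ≤ |u| + |v| := by
      rw [abs_mul, abs_of_nonneg ht.1]
      gcongr
      exact mul_le_of_le_one_left (abs_nonneg v) ht.2

lemma isCompact_rescaledPatterns : IsCompact (rescaledPatterns kap lam mu nu E θ) := by
  refine ((isCompact_univ_pi fun _ => isCompact_univ_pi fun j =>
    isCompact_Icc (a := -(|mu j.rev| + |nu j.rev|)) (b := |lam j.rev| + |kap j.rev|)).prod
    (isCompact_Icc (a := (0 : ℝ)) (b := 1))).of_isClosed_subset ?_ ?_
  · simp only [rescaledPatterns, Set.ofPred_and, Set.ofPred_forall, slack_apply]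
    refine (isClosed_Icc.preimage continuous_snd).inter
      ((isClosed_setOf_isGTPattern (by fun_prop) (by fun_prop) continuous_fst).inter
        (isClosed_iInter fun e => isClosed_iInter fun _ => isClosed_le ?_ ?_)) <;> fun_prop
  · rintro z ⟨ht, hz, -⟩
    refine ⟨Set.mem_univ_pi.2 fun i => Set.mem_univ_pi.2 fun j => ⟨?_, ?_⟩, ht⟩
    · have := hz.bottom_le i j
      have := neg_abs_le (mu j.rev + z.2 * nu j.rev)
      have := abs_add_mul_le ht (mu j.rev) (nu j.rev)
      simp only [Pi.add_apply, Pi.smul_apply, smul_eq_mul] at *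
      linarith
    · have := hz.le_top i j
      have := le_abs_self (lam j.rev + z.2 * kap j.rev)
      have := abs_add_mul_le ht (lam j.rev) (kap j.rev)
      simp only [Pi.add_apply, Pi.smul_apply, smul_eq_mul] at *
      linarith

lemma inv_smul_mem_rescaledPatterns {m : ℕ} (hm : 0 < m) {x : Fin (n + 1) → Fin n → ℝ}
    (hx : IsGTPattern (kap + (m : ℝ) • lam) (nu + (m : ℝ) • mu) x)
    (hxE : ∀ e ∈ E, slack e x ≤ θ e) :
    ((m : ℝ)⁻¹ • x, (m : ℝ)⁻¹) ∈ rescaledPatterns kap lam mu nu E θ := by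
  have hm' : (0 : ℝ) < m := Nat.cast_pos.2 hm
  refine ⟨⟨inv_nonneg.2 hm'.le, inv_le_one_of_one_le₀ (Nat.one_le_cast.2 hm)⟩, ?_,
    fun e he => ?_⟩
  · have := hx.smul (inv_nonneg.2 hm'.le)
    rwa [smul_add, smul_add, smul_smul, smul_smul, inv_mul_cancel₀ hm'.ne', one_smul, one_smul,
      add_comm, add_comm (_ • nu)] at this
  · rw [map_smul, smul_eq_mul]
    exact mul_le_mul_of_nonneg_left (hxE e he) (inv_nonneg.2 hm'.le)

theorem exists_slack_eq_zero_of_frequently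
    (h : ∃ᶠ m : ℕ in atTop, ∃ x, IsGTPattern (kap + (m : ℝ) • lam) (nu + (m : ℝ) • mu) x ∧
      ∀ e ∈ E, slack e x ≤ θ e) :
    ∃ y, IsGTPattern lam mu y ∧ ∀ e ∈ E, slack e y = 0 := by
  obtain ⟨m₀, ⟨x₀, hx₀⟩, hm₀⟩ := (h.and_eventually (eventually_gt_atTop 0)).exists
  obtain ⟨z, hzF, hzmin⟩ := isCompact_rescaledPatterns.exists_isMinOn
    ⟨_, inv_smul_mem_rescaledPatterns hm₀ hx₀.1 hx₀.2⟩ continuous_snd.continuousOn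
  obtain hz0 | hzpos := hzF.1.1.eq_or_lt
  · refine ⟨z.1, by simpa [← hz0] using hzF.2.1, fun e he =>
      le_antisymm (by simpa [← hz0] using hzF.2.2 e he) (hzF.2.1.slack_nonneg e)⟩
  · obtain ⟨m, ⟨x, hx⟩, hm⟩ := (h.and_eventually (eventually_gt_atTop ⌈z.2⁻¹⌉₊)).exists
    have hzm : z.2 ≤ (m : ℝ)⁻¹ :=
      isMinOn_iff.1 hzmin _ (inv_smul_mem_rescaledPatterns (by omega) hx.1 hx.2)
    exact absurd hzm (not_le.2 (inv_lt_of_inv_lt₀ hzpos (Nat.lt_of_ceil_lt hm)))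

end RealPatterns

section Face

variable {n : ℕ}

theorem eventually_exists_slack_eq_zero_on (kap lam mu nu : Fin n → ℤ) (θ : GTConstraint n → ℤ)
    (E : Finset (GTConstraint n)) :
    ∀ᶠ m : ℕ in atTop, ∀ Q, IsGTPattern (kap + m • lam) (nu + m • mu) Q →
      (∀ e ∈ E, slack e Q ≤ θ e) → ∃ p₀, IsGTPattern lam mu p₀ ∧ ∀ e ∈ E, slack e p₀ = 0 := by
  by_cases hfreq : ∃ᶠ m : ℕ in atTop, ∃ x : Fin (n + 1) → Fin n → ℝ,
      IsGTPattern (Int.cast ∘ kap + (m : ℝ) • Int.cast ∘ lam)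
        (Int.cast ∘ nu + (m : ℝ) • Int.cast ∘ mu) x ∧ ∀ e ∈ E, slack e x ≤ θ e
  · obtain ⟨y, hy, hyE⟩ := exists_slack_eq_zero_of_frequently hfreq
    refine Eventually.of_forall fun _ _ _ _ => ⟨fun i j => ⌊y i j⌋, ?_, fun e he => ?_⟩
    · simpa [Function.comp_def] using hy.map Int.floor_mono
    · have := hyE e he
      simp only [slack_apply, sub_eq_zero] at this ⊢
      rw [this]
  · filter_upwards [not_frequently.1 hfreq] with m hm Q hQ hQE
    refine absurd ⟨fun i j => (Q i j : ℝ), ?_, fun e he => ?_⟩ hm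
    · have hshape : ∀ c d : Fin n → ℤ,
          (Int.cast ∘ (c + m • d) : Fin n → ℝ) = Int.cast ∘ c + (m : ℝ) • Int.cast ∘ d :=
        fun c d => by ext; simp
      rw [← hshape, ← hshape]
      exact hQ.map Int.cast_mono
    · simpa using (Int.cast_le (R := ℝ)).2 (hQE e he)

theorem eventually_exists_slack_eq_zero (kap lam mu nu : Fin n → ℤ) (θ : GTConstraint n → ℤ) :
    ∀ᶠ m : ℕ in atTop, ∀ Q, IsGTPattern (kap + m • lam) (nu + m • mu) Q →
      ∃ p₀, IsGTPattern lam mu p₀ ∧ ∀ e, slack e Q ≤ θ e → slack e p₀ = 0 := by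
  classical
  filter_upwards [eventually_all.2 (eventually_exists_slack_eq_zero_on kap lam mu nu θ)]
    with m hm Q hQ
  obtain ⟨p₀, hp₀, htight⟩ := hm {e | slack e Q ≤ θ e} Q hQ fun e he => (mem_filter.1 he).2
  exact ⟨p₀, hp₀, fun e he => htight e (mem_filter.2 ⟨mem_univ e, he⟩)⟩

end Face

lemma natCast_comp_add_mul {n : ℕ} (a b : Fin n → ℕ) (k : ℕ) :
    (Nat.cast ∘ fun i => a i + k * b i : Fin n → ℤ) = Nat.cast ∘ a + k • Nat.cast ∘ b := by
  ext; simp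

lemma equivFunOnFinite_symm_sum_toNat_gtWeightInt {n : ℕ}
    (S : Finset (Fin (n + 1) → Fin n → ℤ)) :
    Finsupp.equivFunOnFinite.symm (fun i => ∑ p ∈ S, (gtWeightInt p i).toNat) =
      ∑ p ∈ S, gtExponent p := by
  ext; simp [gtExponent, Finsupp.finsetSum_apply]

theorem schur_recursion_patterns_general (n : ℕ)
    (kap lam mu nu : Fin n → ℕ)
    (T : Finset (Fin (n + 1) → Fin n → ℤ))
    (hT : (T : Set (Fin (n + 1) → Fin n → ℤ)) = {p | patC p ∈ GTPolytope n lam mu}) :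
    ∃ r : ℕ, ∀ l : ℕ, r ≤ l →
      skewSchur n (fun i => kap i + (l + T.card) * lam i)
          (fun i => nu i + (l + T.card) * mu i) =
        ∑ S ∈ T.powerset.filter (fun S => S.Nonempty),
          MvPolynomial.monomial
              (Finsupp.equivFunOnFinite.symm (fun i => ∑ p ∈ S, (gtWeightInt p i).toNat))
              ((-1 : ℂ) ^ (1 + S.card)) *
            skewSchur n (fun i => kap i + (l + T.card - S.card) * lam i)
              (fun i => nu i + (l + T.card - S.card) * mu i) := by
  obtain rfl : T = gtPatterns (Nat.cast ∘ lam) (Nat.cast ∘ mu) := by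
    ext p
    rw [← mem_coe, hT, Set.mem_ofPred_eq, patC_mem_GTPolytope_iff, mem_gtPatterns]
  set T := gtPatterns (Nat.cast ∘ lam : Fin n → ℤ) (Nat.cast ∘ mu)
  obtain ⟨r, hr⟩ := eventually_atTop.1 <| eventually_exists_slack_eq_zero
    (Nat.cast ∘ kap) (Nat.cast ∘ lam) (Nat.cast ∘ mu) (Nat.cast ∘ nu) fun e => ∑ p ∈ T, slack e p
  refine ⟨r, fun l hl => ?_⟩
  have hvanish := sum_powerset_gtPatterns_eq_zero (kap := Nat.cast ∘ kap) (lam := Nat.cast ∘ lam)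
    (mu := Nat.cast ∘ mu) (nu := Nat.cast ∘ nu) (m := l + #T) le_add_self fun Q hQ => by
      obtain ⟨p₀, hp₀, htight⟩ := hr _ (by omega) Q (mem_gtPatterns.1 hQ)
      exact ⟨p₀, mem_gtPatterns.2 hp₀, htight⟩
  rw [← add_sum_erase _ _ (empty_mem_powerset _)] at hvanish
  have hnonempty : T.powerset.filter (fun S => S.Nonempty) = T.powerset.erase ∅ := by
    ext S; simp [nonempty_iff_ne_empty, and_comm]
  simp only [skewSchur_eq_intSkewSchur, natCast_comp_add_mul,
    equivFunOnFinite_symm_sum_toNat_gtWeightInt, hnonempty]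
  simp only [sum_empty, card_empty, pow_zero, Nat.sub_zero, MvPolynomial.monomial_zero',
    MvPolynomial.C_1, one_mul] at hvanish
  rw [eq_neg_of_add_eq_zero_left hvanish, ← sum_neg_distrib]
  refine sum_congr rfl fun S _ => ?_
  rw [pow_add, pow_one, neg_one_mul, map_neg, neg_mul]

theorem schur_recursion_patterns (n : ℕ) (hn : 1 ≤ n)
    (kap lam mu nu : Fin n → ℕ)
    (hkap : Antitone kap) (hlam : Antitone lam) (hmu : Antitone mu) (hnu : Antitone nu)
    (hml : ∀ i, mu i ≤ lam i)
    (k : ℕ) (hk : 0 < k) (hincl : ∀ i, nu i + k * mu i ≤ kap i + k * lam i)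
    (T : Finset (Fin (n + 1) → Fin n → ℤ))
    (hT : (T : Set (Fin (n + 1) → Fin n → ℤ)) = {p | patC p ∈ GTPolytope n lam mu}) :
    ∃ r : ℕ, ∀ l : ℕ, r ≤ l →
      skewSchur n (fun i => kap i + (l + T.card) * lam i)
          (fun i => nu i + (l + T.card) * mu i) =
        ∑ S ∈ T.powerset.filter (fun S => S.Nonempty),
          MvPolynomial.monomial
              (Finsupp.equivFunOnFinite.symm (fun i => ∑ p ∈ S, (gtWeightInt p i).toNat))
              ((-1 : ℂ) ^ (1 + S.card)) *
            skewSchur n (fun i => kap i + (l + T.card - S.card) * lam i)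
              (fun i => nu i + (l + T.card - S.card) * mu i) :=
  schur_recursion_patterns_general n kap lam mu nu T hT
end
end

section
/- Let n = 3, λ = (5,3,1) and μ = (3,0,0). Then: (i) there exists an integral Gelfand–Tsetlin pattern p ∈ GT_{λ/μ} ∩ ℤ^{4×3} with weight w(p) = (4,2,0) (for instance the pattern with rows (1,3,5), (0,1,4), (0,0,3), (0,0,3)); (ii) (4,2,0) dominates (3,2,1), i.e. 4 ≥ 3, 4+2 ≥ 3+2 and 4+2+0 = 3+2+1; yet (iii) no extreme point v of GT_{λ/μ} has weight w(v) = (4,2,0). -/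
open scoped BigOperators Pointwise

noncomputable section

/-! Since the last entry of the weight is `0` and the last two rows are entrywise comparable,
they coincide, and then every entry of a pattern of weight `(4,2,0)` is forced except the inner
entries `t, s` of the second row, which satisfy `t + s = 5`. So such a pattern lies in the plane of
patterns `(1,3,5), (0,t,s), (0,0,3), (0,0,3)`, which meets the polytope in the square
`[1,3] × [3,5]`. An extreme point of the polytope in this plane is a corner of the square, and no
corner has `t + s = 5`. -/

theorem mem_extremePoints_preimage_of_injective {𝕜 E F : Type*}
    [Ring 𝕜] [PartialOrder 𝕜] [IsOrderedRing 𝕜]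
    [AddCommGroup E] [Module 𝕜 E] [AddCommGroup F] [Module 𝕜 F]
    {f : E →ᵃ[𝕜] F} (hf : Function.Injective f) {s : Set F} {x : E}
    (hx : f x ∈ Set.extremePoints 𝕜 s) : x ∈ Set.extremePoints 𝕜 (f ⁻¹' s) := by
  refine ⟨hx.1, fun x₁ hx₁ x₂ hx₂ hseg => hf (hx.2 hx₁ hx₂ ?_)⟩
  rw [← image_openSegment]
  exact Set.mem_image_of_mem f hseg

theorem GTPolytope.row_succ_eq_of_gtWeight_eq_zero {n : ℕ} {lam mu : Fin n → ℕ}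
    {x : Fin (n + 1) → Fin n → ℝ} (hx : x ∈ GTPolytope n lam mu) {i : Fin n}
    (hw : gtWeight x i = 0) : x i.succ = x i.castSucc := by
  have hterms := (Finset.sum_eq_zero_iff_of_nonneg fun j _ => sub_nonneg.2 (hx.2.2.1 i j)).1 hw
  exact funext fun j => (sub_eq_zero.1 (hterms j (Finset.mem_univ j))).symm

def gtSlice : ℝ × ℝ →ᵃ[ℝ] (Fin 4 → Fin 3 → ℝ) where
  toFun p := ![![1, 3, 5], ![0, p.1, p.2], ![0, 0, 3], ![0, 0, 3]]
  linear :=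
    { toFun := fun p => ![![0, 0, 0], ![0, p.1, p.2], ![0, 0, 0], ![0, 0, 0]]
      map_add' := fun p q => by ext i j; fin_cases i <;> fin_cases j <;> simp
      map_smul' := fun c p => by ext i j; fin_cases i <;> fin_cases j <;> simp }
  map_vadd' p v := by ext i j; fin_cases i <;> fin_cases j <;> simp [add_comm]

@[simp]
theorem gtSlice_apply (p : ℝ × ℝ) :
    gtSlice p = ![![1, 3, 5], ![0, p.1, p.2], ![0, 0, 3], ![0, 0, 3]] := rfl

theorem gtSlice_injective : Function.Injective gtSlice := fun p q h =>
  Prod.ext (by simpa using congrFun (congrFun h 1) 1) (by simpa using congrFun (congrFun h 1) 2)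

theorem preimage_gtSlice_GTPolytope :
    gtSlice ⁻¹' GTPolytope 3 ![5, 3, 1] ![3, 0, 0] = Set.Icc 1 3 ×ˢ Set.Icc 3 5 := by
  ext ⟨t, s⟩
  constructor
  · rintro ⟨-, -, hdown, hup⟩
    exact ⟨⟨by simpa using hup 0 0 (by decide), by simpa using hdown 0 1⟩,
      by simpa using hup 0 1 (by decide), by simpa using hdown 0 2⟩
  · rintro ⟨⟨ht₁, ht₃⟩, hs₃, hs₅⟩
    refine ⟨fun j => ?_, fun j => ?_, fun i j => ?_, fun i j h => ?_⟩
    all_goals fin_cases j <;> try fin_cases i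
    all_goals first | exact absurd h (by decide) | simp [Fin.rev] <;> linarith

theorem eq_gtSlice_of_gtWeight_eq {x : Fin 4 → Fin 3 → ℝ}
    (hx : x ∈ GTPolytope 3 ![5, 3, 1] ![3, 0, 0]) (hw : gtWeight x = ![4, 2, 0]) :
    x = gtSlice (x 1 1, x 1 2) ∧ x 1 1 + x 1 2 = 5 := by
  have hrow₂ : x 3 = x 2 := GTPolytope.row_succ_eq_of_gtWeight_eq_zero hx (i := 2) (by simp [hw])
  obtain ⟨htop, hbot, hdown, hup⟩ := hx
  have hrow₀ : x 0 = ![1, 3, 5] := funext fun j => by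
    have := htop j; fin_cases j <;> simpa [Fin.rev] using this
  have hrow₃ : x 3 = ![0, 0, 3] := funext fun j => by
    have := hbot j; fin_cases j <;> simpa [Fin.rev] using this
  have hx₁₀ : x 1 0 = 0 := le_antisymm (by simpa [← hrow₂, hrow₃] using hup 1 0 (by decide))
    (by simpa [← hrow₂, hrow₃] using hdown 1 0)
  have hsum : x 1 0 + x 1 1 + x 1 2 = 5 := by
    have := congrFun hw 0
    simp only [gtWeight, Fin.sum_univ_three, hrow₀, Finset.sum_sub_distrib, Fin.isValue,
      Fin.castSucc_zero, Fin.succ_zero_eq_one, Matrix.cons_val] at this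
    linarith
  refine ⟨?_, by linarith⟩
  ext i j
  fin_cases i <;> fin_cases j <;> simp [hrow₀, ← hrow₂, hrow₃, hx₁₀]

theorem counterexample_weight_not_vertex_weight :
    (∃ p : Fin 4 → Fin 3 → ℤ,
        patC p ∈ GTPolytope 3 ![5, 3, 1] ![3, 0, 0] ∧ gtWeightInt p = ![4, 2, 0]) ∧
    ((3 : ℕ) ≤ 4 ∧ (3 + 2 : ℕ) ≤ 4 + 2 ∧ (4 + 2 + 0 : ℕ) = 3 + 2 + 1) ∧
    (∀ x ∈ Set.extremePoints ℝ (GTPolytope 3 ![5, 3, 1] ![3, 0, 0]),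
      gtWeight x ≠ ![4, 2, 0]) := by
  refine ⟨⟨![![1, 3, 5], ![0, 1, 4], ![0, 0, 3], ![0, 0, 3]], ?_, by decide⟩, by norm_num, ?_⟩
  · have hp : patC ![![1, 3, 5], ![0, 1, 4], ![0, 0, 3], ![0, 0, 3]] = gtSlice (1, 4) := by
      ext i j; fin_cases i <;> fin_cases j <;> simp [patC]
    rw [hp, ← Set.mem_preimage, preimage_gtSlice_GTPolytope]
    norm_num
  · intro x hx hw
    obtain ⟨hslice, hsum⟩ := eq_gtSlice_of_gtWeight_eq hx.1 hw
    have hq := mem_extremePoints_preimage_of_injective gtSlice_injective (hslice ▸ hx)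
    rw [preimage_gtSlice_GTPolytope, extremePoints_prod, Set.extremePoints_Icc (by norm_num),
      Set.extremePoints_Icc (by norm_num)] at hq
    simp only [Set.mem_prod, Set.mem_insert_iff, Set.mem_singleton_iff] at hq
    obtain ⟨h₁ | h₁, h₂ | h₂⟩ := hq <;> linarith
end
end

section
/- For integers d ≥ 1 and m ≥ d, the indicator function identity 𝟙_{mΔ_{d−1}} = Σ_{∅≠I⊆[d]} (−1)^{1+|I|} · 𝟙_{(m−|I|)Δ_{d−1} + Σ_{i∈I} e_i} holds pointwise on ℝ^d (as real-valued functions), where Δ_{d−1} is the standard simplex, e_1,…,e_d are the standard basis vectors, and (m−|I|)Δ_{d−1} + Σ_{i∈I} e_i denotes the translate of the dilate (m−|I|)Δ_{d−1} by the vector Σ_{i∈I} e_i. -/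
open scoped BigOperators Pointwise

noncomputable section

/-- The `m`-th dilate of the standard simplex:
`mΔ_{d-1} = {x ∈ ℝ^d : x_1 + ⋯ + x_d = m, x ≥ 0}`. -/
def dilSimplex (d m : ℕ) : Set (Fin d → ℝ) :=
  {x | ∑ i, x i = (m : ℝ) ∧ ∀ i, 0 ≤ x i}

/-! Translating `(m - |I|)Δ` by the indicator vector of `I` cuts out exactly the points of `mΔ`
whose coordinates indexed by `I` are at least `1`. So for `x ∈ mΔ` the right-hand side is
the alternating sum over the nonempty subsets of `S = {i | 1 ≤ x i}`, which is `1` as soon as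
`S ≠ ∅`; and `S` is nonempty because the coordinates of `x` sum to `m ≥ d`. -/

open Finset

theorem Finset.sum_filter_nonempty_powerset_neg_one_pow_one_add_card {R α : Type*} [Ring R]
    {S : Finset α} (hS : S.Nonempty) :
    ∑ I ∈ S.powerset with I.Nonempty, (-1 : R) ^ (1 + #I) = 1 := by
  classical
  have halt : ∑ I ∈ S.powerset, (-1 : R) ^ #I = 0 := by
    exact_mod_cast congrArg (Int.cast : ℤ → R) (sum_powerset_neg_one_pow_card_of_nonempty hS)
  have hsplit := sum_erase_add S.powerset (fun I => (-1 : R) ^ (1 + #I)) (empty_mem_powerset S)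
  have hfilter : {I ∈ S.powerset | I.Nonempty} = S.powerset.erase ∅ := by
    simp only [nonempty_iff_ne_empty, filter_ne']
  rw [hfilter]
  simp only [pow_add, pow_one, neg_one_mul, sum_neg_distrib, halt, card_empty, pow_zero, neg_zero,
    add_neg_eq_zero] at hsplit ⊢
  exact hsplit

theorem mem_dilSimplex_add_sum_single_iff {d m : ℕ} {I : Finset (Fin d)} (hI : #I ≤ m)
    {x : Fin d → ℝ} :
    x ∈ dilSimplex d (m - #I) + {∑ i ∈ I, Pi.single i (1 : ℝ)} ↔
      x ∈ dilSimplex d m ∧ ∀ i ∈ I, 1 ≤ x i := by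
  rw [Set.add_singleton, Set.image_add_right, Set.mem_preimage]
  simp only [dilSimplex, Set.mem_ofPred_eq, ← sub_eq_add_neg, Pi.sub_apply, sum_sub_distrib,
    Finset.sum_apply, sum_pi_single, sum_ite_mem, univ_inter, sum_const, nsmul_one, Nat.cast_sub hI,
    sub_left_inj, sub_nonneg]
  rw [and_assoc]
  refine and_congr_right fun _ =>
    ⟨fun h => ⟨fun i => ?_, fun i hi => ?_⟩, fun ⟨h0, h1⟩ i => ?_⟩
  · exact le_trans (by split_ifs <;> norm_num) (h i)
  · simpa [hi] using h i
  · split_ifs with hi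
    exacts [h1 i hi, h0 i]

theorem exists_one_le_of_mem_dilSimplex {d m : ℕ} (hd : 1 ≤ d) (hm : d ≤ m)
    {x : Fin d → ℝ} (hx : x ∈ dilSimplex d m) : ∃ i, 1 ≤ x i := by
  have hne : (univ : Finset (Fin d)).Nonempty := univ_nonempty_iff.mpr ⟨⟨0, hd⟩⟩
  obtain ⟨i, -, hi⟩ := exists_le_of_sum_le hne (f := fun _ => (1 : ℝ)) (g := x) (by
    simpa [hx.1] using (Nat.cast_le.mpr hm : (d : ℝ) ≤ m))
  exact ⟨i, hi⟩

theorem dilated_simplex_indicator_recursion (d : ℕ) (hd : 1 ≤ d) (m : ℕ) (hm : d ≤ m)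
    (x : Fin d → ℝ) :
    Set.indicator (dilSimplex d m) (fun _ => (1 : ℝ)) x =
      ∑ I ∈ (Finset.univ : Finset (Fin d)).powerset.filter (fun I => I.Nonempty),
        (-1 : ℝ) ^ (1 + I.card) *
          Set.indicator (dilSimplex d (m - I.card) + {∑ i ∈ I, Pi.single i (1 : ℝ)})
            (fun _ => (1 : ℝ)) x := by
  have hIm (I : Finset (Fin d)) : #I ≤ m := (card_le_univ I).trans (by simpa using hm)
  by_cases hx : x ∈ dilSimplex d m
  · set S : Finset (Fin d) := {i | 1 ≤ x i}
    have hS : S.Nonempty := by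
      simpa [S, Finset.Nonempty] using exists_one_le_of_mem_dilSimplex hd hm hx
    have hterm (I : Finset (Fin d)) :
        Set.indicator (dilSimplex d (m - #I) + {∑ i ∈ I, Pi.single i (1 : ℝ)})
          (fun _ => (1 : ℝ)) x = if I ⊆ S then 1 else 0 := by
      classical
      rw [Set.indicator_apply, mem_dilSimplex_add_sum_single_iff (hIm I)]
      simp [hx, S, subset_iff]
    have hsubsets : {I ∈ {I ∈ (univ : Finset (Fin d)).powerset | I.Nonempty} | I ⊆ S} =
        {I ∈ S.powerset | I.Nonempty} := by
      ext I
      simp [and_comm]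
    simp only [hterm, mul_ite, mul_one, mul_zero, ← sum_filter, hsubsets,
      Set.indicator_of_mem hx, sum_filter_nonempty_powerset_neg_one_pow_one_add_card hS]
  · refine (Set.indicator_of_notMem hx _).trans (sum_eq_zero fun I _ => ?_).symm
    rw [Set.indicator_of_notMem fun h => hx ((mem_dilSimplex_add_sum_single_iff (hIm I)).1 h).1,
      mul_zero]
end
end
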